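/- arXiv:2502.12063 — 6 statements merged into one kernel-verified Lean document; each statement's English description precedes it below -/
import Mathlib

section
/- Let X = {x_1, …, x_n} be a universe of points, let S_in ⊆ X be a fixed input set of size n_in ≥ 2, and let S_out be a uniformly random subset of S_in of size n_out (1 ≤ n_out ≤ n_in, sampled without replacement). Let K ∈ ℝ^{n×n} be symmetric positive semidefinite, and for an SPSD matrix M define C_M := Σ_{i=1}^n p_in,i M_ii − p_inᵀ M p_in. Then E[(p_in − q_out)ᵀ K (p_in − q_out)] = (1/n_out)·((n_in − n_out)/(n_in − 1))·C_K, and for any nonempty index set I ⊆ {1,…,n}, E[max_{i∈I} (e_iᵀ K (p_in − q_out))²] ≥ (1/n_out)·((n_in − n_out)/(n_in − 1))·max_{i∈I} C_{K e_i e_iᵀ K}, where e_i is the i-th standard basis vector of ℝ^n. -/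
/-!
Write `d_T = p_in - q_T`. Averaged over the `C(n_in, n_out)` subsets `T`, the second moments
of `d_T` are those of sampling without replacement,
`E[d_a d_b] = (1/n_out) (n_in - n_out)/(n_in - 1) (δ_ab p_a - p_a p_b)`,
which comes from counting the subsets that contain a given point or pair:
`#{T ⊇ A} · C(n_in, |A|) = C(n_in, n_out) · C(n_out, |A|)`. Summing against `K_ab` gives the
first claim. For the second, `(e_iᵀ K d)² = dᵀ (K e_i e_iᵀ K) d` by symmetry of `K`, so the
first claim computes the expectation for each fixed `i`, and the maximum over `i ∈ I`
dominates each of them.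
-/

open MeasureTheory Matrix Finset

noncomputable section

/-- Probability vector of a finite index set: mass `1/|S|` on each element of `S`. -/
def probVec {n : ℕ} (S : Finset (Fin n)) : Fin n → ℝ :=
  fun i => if i ∈ S then ((S.card : ℝ))⁻¹ else 0

/-- `C_M = ∑ i p_in,i M_ii − p_inᵀ M p_in`. -/
def Cmat {n : ℕ} (Sin : Finset (Fin n)) (M : Matrix (Fin n) (Fin n) ℝ) : ℝ :=
  (∑ i, probVec Sin i * M i i) - probVec Sin ⬝ᵥ (M *ᵥ probVec Sin)

theorem Finset.card_filter_superset_powersetCard_mul_choose {α : Type*} [DecidableEq α]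
    {A s : Finset α} (hA : A ⊆ s) (k : ℕ) :
    #{T ∈ s.powersetCard k | A ⊆ T} * (#s).choose #A = (#s).choose k * k.choose #A := by
  rcases le_or_gt #A k with hAk | hkA
  · rw [card_filter_powersetCard_subset A s k hA hAk, Nat.choose_mul hAk, mul_comm]
  · have hempty : {T ∈ s.powersetCard k | A ⊆ T} = ∅ :=
      filter_eq_empty_iff.2 fun T hT hAT =>
        (card_le_card hAT).not_gt (by rwa [(mem_powersetCard.1 hT).2])
    rw [hempty, Nat.choose_eq_zero_of_lt hkA]
    simp

theorem probVec_eq_zero_of_notMem {n : ℕ} {S : Finset (Fin n)} {a : Fin n} (ha : a ∉ S) :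
    probVec S a = 0 :=
  if_neg ha

theorem probVec_of_mem {n : ℕ} {S : Finset (Fin n)} {a : Fin n} (ha : a ∈ S) :
    probVec S a = 1 / #S := by
  rw [probVec, if_pos ha, one_div]

theorem Finset.cast_card_filter_mem_powersetCard {α : Type*} [DecidableEq α] {s : Finset α}
    {a : α} (ha : a ∈ s) (k : ℕ) :
    (#{T ∈ s.powersetCard k | a ∈ T} : ℝ) * #s = (#s).choose k * k := by
  have h := card_filter_superset_powersetCard_mul_choose (singleton_subset_iff.2 ha) k
  simp only [singleton_subset_iff, card_singleton, Nat.choose_one_right] at h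
  exact_mod_cast h

theorem Finset.cast_card_filter_mem_mem_powersetCard {α : Type*} [DecidableEq α] {s : Finset α}
    {a b : α} (ha : a ∈ s) (hb : b ∈ s) (hab : a ≠ b) (k : ℕ) :
    (#{T ∈ s.powersetCard k | a ∈ T ∧ b ∈ T} : ℝ) * (#s * (#s - 1)) =
      (#s).choose k * (k * (k - 1)) := by
  have h := card_filter_superset_powersetCard_mul_choose
    (insert_subset ha (singleton_subset_iff.2 hb)) k
  simp only [insert_subset_iff, singleton_subset_iff, card_pair hab] at h
  have h' := congrArg (fun x : ℕ => (x : ℝ) * 2) h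
  simp only [Nat.cast_mul, Nat.cast_choose_two] at h'
  linear_combination h'

theorem sum_powersetCard_sub_probVec_mul_sub_probVec_of_mem {n : ℕ} {S : Finset (Fin n)}
    {k : ℕ} (hk : 1 ≤ k) (hS : 2 ≤ #S) {a b : Fin n} (ha : a ∈ S) (hb : b ∈ S) :
    ∑ T ∈ S.powersetCard k, (probVec S a - probVec T a) * (probVec S b - probVec T b) =
      (#S).choose k * (1 / k * ((#S - k) / (#S - 1))) *
        ((if a = b then probVec S a else 0) - probVec S a * probVec S b) := by
  have hS' : (2 : ℝ) ≤ #S := by exact_mod_cast hS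
  set m : ℝ := (#S : ℝ)
  have hm : m ≠ 0 := by linarith
  have hm1 : m - 1 ≠ 0 := by linarith
  have hk0 : (k : ℝ) ≠ 0 := by exact_mod_cast (Nat.one_le_iff_ne_zero.1 hk)
  have expand : ∀ T ∈ S.powersetCard k,
      (probVec S a - probVec T a) * (probVec S b - probVec T b) =
        1 / m ^ 2 - (if a ∈ T then 1 else 0) / (m * k) - (if b ∈ T then 1 else 0) / (m * k)
          + (if a ∈ T ∧ b ∈ T then 1 else 0) / k ^ 2 := by
    intro T hT
    rw [probVec_of_mem ha, probVec_of_mem hb]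
    simp only [probVec, (mem_powersetCard.1 hT).2]
    split_ifs <;> simp_all <;> ring
  rw [sum_congr rfl expand]
  simp only [sum_add_distrib, sum_sub_distrib, ← sum_div, sum_const, card_powersetCard,
    sum_boole, nsmul_eq_mul]
  rw [eq_div_of_mul_eq hm (cast_card_filter_mem_powersetCard ha k),
    eq_div_of_mul_eq hm (cast_card_filter_mem_powersetCard hb k), probVec_of_mem ha,
    probVec_of_mem hb]
  split_ifs with hab
  · subst hab
    rw [filter_congr fun T _ => and_self_iff,
      eq_div_of_mul_eq hm (cast_card_filter_mem_powersetCard ha k)]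
    field_simp
    ring
  · rw [eq_div_of_mul_eq (mul_ne_zero hm hm1) (cast_card_filter_mem_mem_powersetCard ha hb hab k)]
    field_simp
    ring

theorem sum_powersetCard_sub_probVec_mul_sub_probVec {n : ℕ} (S : Finset (Fin n)) {k : ℕ}
    (hk : 1 ≤ k) (hS : 2 ≤ #S) (a b : Fin n) :
    ∑ T ∈ S.powersetCard k, (probVec S a - probVec T a) * (probVec S b - probVec T b) =
      (#S).choose k * (1 / k * ((#S - k) / (#S - 1))) *
        ((if a = b then probVec S a else 0) - probVec S a * probVec S b) := by
  have hT_zero : ∀ c ∉ S, ∀ T ∈ S.powersetCard k, probVec T c = 0 := fun c hc T hT =>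
    probVec_eq_zero_of_notMem fun hcT => hc ((mem_powersetCard.1 hT).1 hcT)
  by_cases ha : a ∈ S
  swap
  · rw [sum_eq_zero fun T hT => by simp [hT_zero a ha T hT, probVec_eq_zero_of_notMem ha]]
    simp [probVec_eq_zero_of_notMem ha]
  by_cases hb : b ∈ S
  swap
  · rw [sum_eq_zero fun T hT => by simp [hT_zero b hb T hT, probVec_eq_zero_of_notMem hb]]
    simp [probVec_eq_zero_of_notMem hb, ne_of_mem_of_not_mem ha hb]
  exact sum_powersetCard_sub_probVec_mul_sub_probVec_of_mem hk hS ha hb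

theorem dotProduct_mulVec_eq_sum {ι R : Type*} [Fintype ι] [CommSemiring R]
    (M : Matrix ι ι R) (v w : ι → R) :
    v ⬝ᵥ (M *ᵥ w) = ∑ a, ∑ b, M a b * (v a * w b) := by
  simp only [dotProduct, mulVec, mul_sum]
  exact sum_congr rfl fun a _ => sum_congr rfl fun b _ => by ring

theorem Cmat_eq_sum {n : ℕ} (S : Finset (Fin n)) (M : Matrix (Fin n) (Fin n) ℝ) :
    Cmat S M = ∑ a, ∑ b, M a b *
      ((if a = b then probVec S a else 0) - probVec S a * probVec S b) := by
  simp only [Cmat, dotProduct_mulVec_eq_sum, mul_sub, sum_sub_distrib, mul_ite, mul_zero,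
    sum_ite_eq, mem_univ, if_true, mul_comm]

theorem sum_powersetCard_quadForm_sub_probVec {n : ℕ} (S : Finset (Fin n)) {k : ℕ}
    (hk : 1 ≤ k) (hS : 2 ≤ #S) (M : Matrix (Fin n) (Fin n) ℝ) :
    ∑ T ∈ S.powersetCard k, (probVec S - probVec T) ⬝ᵥ (M *ᵥ (probVec S - probVec T)) =
      (#S).choose k * (1 / k * ((#S - k) / (#S - 1))) * Cmat S M := by
  calc _ = ∑ a, ∑ b, M a b *
        ∑ T ∈ S.powersetCard k, (probVec S a - probVec T a) * (probVec S b - probVec T b) := by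
        simp only [dotProduct_mulVec_eq_sum, Pi.sub_apply, mul_sum]
        rw [sum_comm]
        exact sum_congr rfl fun a _ => sum_comm
    _ = _ := by
        simp only [sum_powersetCard_sub_probVec_mul_sub_probVec S hk hS, Cmat_eq_sum, mul_sum]
        exact sum_congr rfl fun a _ => sum_congr rfl fun b _ => by ring

section UniformLaw

variable {Ω α : Type*} {X : Ω → α} {s : Finset α}

theorem comp_eq_sum_indicator (hX : ∀ ω, X ω ∈ s) (f : α → ℝ) :
    (fun ω => f (X ω)) = fun ω => ∑ t ∈ s, {ω | X ω = t}.indicator (fun _ => f t) ω := by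
  funext ω
  rw [sum_eq_single_of_mem (X ω) (hX ω),
    Set.indicator_of_mem (show ω ∈ {ω' | X ω' = X ω} from rfl)]
  exact fun t _ ht => Set.indicator_of_notMem (Ne.symm ht) _

variable [MeasurableSpace Ω] {μ : Measure Ω} {c : ℝ}

theorem integrable_indicator_fiber_of_uniform (hmeas : ∀ t ∈ s, MeasurableSet {ω | X ω = t})
    (hunif : ∀ t ∈ s, μ {ω | X ω = t} = ENNReal.ofReal c) {t : α} (ht : t ∈ s) (y : ℝ) :
    Integrable ({ω | X ω = t}.indicator fun _ => y) μ :=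
  (integrable_indicator_iff (hmeas t ht)).2 (integrableOn_const (by simp [hunif t ht]))

theorem integrable_comp_of_uniform (hX : ∀ ω, X ω ∈ s)
    (hmeas : ∀ t ∈ s, MeasurableSet {ω | X ω = t})
    (hunif : ∀ t ∈ s, μ {ω | X ω = t} = ENNReal.ofReal c) (f : α → ℝ) :
    Integrable (fun ω => f (X ω)) μ := by
  rw [comp_eq_sum_indicator hX f]
  exact integrable_finsetSum s fun t ht =>
    integrable_indicator_fiber_of_uniform hmeas hunif ht (f t)

theorem integral_comp_of_uniform (hX : ∀ ω, X ω ∈ s)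
    (hmeas : ∀ t ∈ s, MeasurableSet {ω | X ω = t})
    (hunif : ∀ t ∈ s, μ {ω | X ω = t} = ENNReal.ofReal c) (hc : 0 ≤ c) (f : α → ℝ) :
    ∫ ω, f (X ω) ∂μ = c * ∑ t ∈ s, f t := by
  rw [comp_eq_sum_indicator hX f, integral_finsetSum s fun t ht =>
    integrable_indicator_fiber_of_uniform hmeas hunif ht (f t), mul_sum]
  refine sum_congr rfl fun t ht => ?_
  rw [integral_indicator_const _ (hmeas t ht), measureReal_def, hunif t ht,
    ENNReal.toReal_ofReal hc, smul_eq_mul]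

end UniformLaw

theorem integral_quadForm_sub_probVec_of_uniform {n : ℕ} {Ω : Type*} [MeasurableSpace Ω]
    {μ : Measure Ω} (S : Finset (Fin n)) {k : ℕ} (hk : 1 ≤ k) (hkS : k ≤ #S) (hS : 2 ≤ #S)
    {Sout : Ω → Finset (Fin n)} (hSout : ∀ ω, Sout ω ∈ S.powersetCard k)
    (hmeas : ∀ T ∈ S.powersetCard k, MeasurableSet {ω | Sout ω = T})
    (hunif : ∀ T ∈ S.powersetCard k,
      μ {ω | Sout ω = T} = ENNReal.ofReal (1 / ((#S).choose k : ℝ)))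
    (M : Matrix (Fin n) (Fin n) ℝ) :
    ∫ ω, (probVec S - probVec (Sout ω)) ⬝ᵥ (M *ᵥ (probVec S - probVec (Sout ω))) ∂μ =
      1 / k * ((#S - k) / (#S - 1)) * Cmat S M := by
  have hN : ((#S).choose k : ℝ) ≠ 0 := by exact_mod_cast (Nat.choose_pos hkS).ne'
  rw [integral_comp_of_uniform hSout hmeas hunif (by positivity)
      (fun T => (probVec S - probVec T) ⬝ᵥ (M *ᵥ (probVec S - probVec T))),
    sum_powersetCard_quadForm_sub_probVec S hk hS M]
  field_simp

theorem sq_single_dotProduct_mulVec_eq_quadForm {ι R : Type*} [Fintype ι] [DecidableEq ι]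
    [CommRing R] {K : Matrix ι ι R} (hK : K.IsSymm) (i : ι) (v : ι → R) :
    (Pi.single i 1 ⬝ᵥ (K *ᵥ v)) ^ 2 = v ⬝ᵥ (Matrix.of (fun a b => K a i * K i b) *ᵥ v) := by
  rw [single_one_dotProduct, dotProduct_mulVec_eq_sum, mulVec, dotProduct, sq, sum_mul_sum]
  refine sum_congr rfl fun a _ => sum_congr rfl fun b _ => ?_
  rw [of_apply, ← hK.apply i a]
  ring

theorem stmt0_general {n : ℕ} {Ω : Type*} [MeasureSpace Ω]
    (Sin : Finset (Fin n)) (nin nout : ℕ)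
    (hnin : Sin.card = nin) (hnin2 : 2 ≤ nin) (hnout1 : 1 ≤ nout) (hnout2 : nout ≤ nin)
    (Sout : Ω → Finset (Fin n))
    (hsub : ∀ ω, Sout ω ⊆ Sin) (hcard : ∀ ω, (Sout ω).card = nout)
    (hmeas : ∀ T : Finset (Fin n), MeasurableSet {ω | Sout ω = T})
    (hunif : ∀ T : Finset (Fin n), T ⊆ Sin → T.card = nout →
      volume {ω | Sout ω = T} = ENNReal.ofReal (1 / (nin.choose nout : ℝ)))
    (K : Matrix (Fin n) (Fin n) ℝ) (hK : K.PosSemidef)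
    (I : Finset (Fin n)) (hI : I.Nonempty) :
    (∫ ω, (probVec Sin - probVec (Sout ω)) ⬝ᵥ (K *ᵥ (probVec Sin - probVec (Sout ω)))) =
      (1 / (nout : ℝ)) * (((nin : ℝ) - (nout : ℝ)) / ((nin : ℝ) - 1)) * Cmat Sin K ∧
    (1 / (nout : ℝ)) * (((nin : ℝ) - (nout : ℝ)) / ((nin : ℝ) - 1)) *
        (I.sup' hI fun i => Cmat Sin (Matrix.of fun a b => K a i * K i b)) ≤
      ∫ ω, I.sup' hI fun i =>
        (Pi.single i (1:ℝ) ⬝ᵥ (K *ᵥ (probVec Sin - probVec (Sout ω)))) ^ 2 := by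
  subst hnin
  have hSout : ∀ ω, Sout ω ∈ Sin.powersetCard nout := fun ω =>
    mem_powersetCard.2 ⟨hsub ω, hcard ω⟩
  have hunif' : ∀ T ∈ Sin.powersetCard nout, volume {ω | Sout ω = T} =
      ENNReal.ofReal (1 / ((#Sin).choose nout : ℝ)) := fun T hT =>
    hunif T (mem_powersetCard.1 hT).1 (mem_powersetCard.1 hT).2
  have hmean := integral_quadForm_sub_probVec_of_uniform (μ := volume) Sin hnout1 hnout2 hnin2
    hSout (fun T _ => hmeas T) hunif'
  refine ⟨hmean K, ?_⟩
  obtain ⟨i, hi, hsup⟩ :=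
    exists_mem_eq_sup' hI fun i => Cmat Sin (Matrix.of fun a b => K a i * K i b)
  rw [hsup, ← hmean]
  have hint := integrable_comp_of_uniform hSout (fun T _ => hmeas T) hunif'
  refine integral_mono
    (hint fun T => (probVec Sin - probVec T) ⬝ᵥ
      (Matrix.of (fun a b => K a i * K i b) *ᵥ (probVec Sin - probVec T)))
    (hint fun T => I.sup' hI fun i => (Pi.single i (1:ℝ) ⬝ᵥ (K *ᵥ (probVec Sin - probVec T))) ^ 2)
    fun ω => ?_
  rw [← sq_single_dotProduct_mulVec_eq_quadForm (isHermitian_iff_isSymm.1 hK.isHermitian)]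
  exact le_sup' (fun i => (Pi.single i (1:ℝ) ⬝ᵥ (K *ᵥ (probVec Sin - probVec (Sout ω)))) ^ 2) hi

theorem stmt0 {n : ℕ} {Ω : Type*} [MeasureSpace Ω]
    [IsProbabilityMeasure (volume : Measure Ω)]
    (Sin : Finset (Fin n)) (nin nout : ℕ)
    (hnin : Sin.card = nin) (hnin2 : 2 ≤ nin) (hnout1 : 1 ≤ nout) (hnout2 : nout ≤ nin)
    (Sout : Ω → Finset (Fin n))
    (hsub : ∀ ω, Sout ω ⊆ Sin) (hcard : ∀ ω, (Sout ω).card = nout)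
    (hmeas : ∀ T : Finset (Fin n), MeasurableSet {ω | Sout ω = T})
    (hunif : ∀ T : Finset (Fin n), T ⊆ Sin → T.card = nout →
      volume {ω | Sout ω = T} = ENNReal.ofReal (1 / (nin.choose nout : ℝ)))
    (K : Matrix (Fin n) (Fin n) ℝ) (hK : K.PosSemidef)
    (I : Finset (Fin n)) (hI : I.Nonempty) :
    (∫ ω, (probVec Sin - probVec (Sout ω)) ⬝ᵥ (K *ᵥ (probVec Sin - probVec (Sout ω)))) =
      (1 / (nout : ℝ)) * (((nin : ℝ) - (nout : ℝ)) / ((nin : ℝ) - 1)) * Cmat Sin K ∧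
    (1 / (nout : ℝ)) * (((nin : ℝ) - (nout : ℝ)) / ((nin : ℝ) - 1)) *
        (I.sup' hI fun i => Cmat Sin (Matrix.of fun a b => K a i * K i b)) ≤
      ∫ ω, I.sup' hI fun i =>
        (Pi.single i (1:ℝ) ⬝ᵥ (K *ᵥ (probVec Sin - probVec (Sout ω)))) ^ 2 :=
  stmt0_general Sin nin nout hnin hnin2 hnout1 hnout2 Sout hsub hcard hmeas hunif K hK I hI

end
end

section
/- Let X = {x_1, …, x_n} be a universe, S_in ⊆ X a fixed input set of size n_in ≥ 2, and let S_out be a uniformly random subset of S_in of size n_out (sampled without replacement). Let K ∈ ℝ^{n×n} be symmetric positive semidefinite with maximum absolute entry ‖K‖_max. Then for every u ∈ ℝ^n, E[exp(uᵀ K (p_in − q_out))] ≤ exp((‖K‖_max/(2 n_out))·uᵀ K u); that is, uniform subsampling is a (K, √(‖K‖_max/n_out), 0)-sub-Gaussian thinning algorithm. -/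
/-!
With `v = uᵀ K`, the exponent `uᵀ K (p_in - q_out)` is the sum over `S_out` of the centred values
`c j = (mean_{S_in} v - v j) / n_out`. For non-negative weights `b`, the average over `n_out`-subsets
of `∏ b` is at most `(mean b) ^ n_out` (a Maclaurin-type inequality, proved by induction from a
Newton-type inequality that reduces to Cauchy–Schwarz), so sampling without replacement is dominated
by sampling with replacement, and Hoeffding's lemma bounds `mean (exp c)` by `exp (width² / 8)`.
Cauchy–Schwarz for the positive semidefinite form `K` at `e_i - e_j` bounds the width of `c` by
`2 √(‖K‖_max · uᵀ K u) / n_out`.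
-/

open MeasureTheory Matrix Finset

noncomputable section

section Maclaurin

variable {ι : Type*} [DecidableEq ι] (S : Finset ι)

theorem sum_powersetCard_succ_sum_erase {β : Type*} [AddCommMonoid β] (r : ℕ)
    (f : Finset ι → ι → β) :
    ∑ U ∈ S.powersetCard (r + 1), ∑ i ∈ U, f (U.erase i) i =
      ∑ W ∈ S.powersetCard r, ∑ i ∈ S \ W, f W i := by
  rw [sum_sigma', sum_sigma']
  refine sum_nbij' (fun x => ⟨x.1.erase x.2, x.2⟩) (fun x => ⟨insert x.2 x.1, x.2⟩)
    ?_ ?_ ?_ ?_ fun _ _ => rfl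
  · rintro ⟨U, i⟩ h
    simp only [mem_sigma, mem_powersetCard, mem_sdiff] at h ⊢
    obtain ⟨⟨hUS, hUc⟩, hiU⟩ := h
    exact ⟨⟨(erase_subset _ _).trans hUS, by rw [card_erase_of_mem hiU, hUc]; rfl⟩,
      hUS hiU, notMem_erase _ _⟩
  · rintro ⟨W, i⟩ h
    simp only [mem_sigma, mem_powersetCard, mem_sdiff] at h ⊢
    obtain ⟨⟨hWS, hWc⟩, hiS, hiW⟩ := h
    exact ⟨⟨insert_subset hiS hWS, by rw [card_insert_of_notMem hiW, hWc]⟩, mem_insert_self _ _⟩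
  · rintro ⟨U, i⟩ h
    simp only [mem_sigma] at h
    simp [insert_erase h.2]
  · rintro ⟨W, i⟩ h
    simp only [mem_sigma, mem_sdiff] at h
    simp [erase_insert h.2.2]

variable {R : Type*}

theorem succ_mul_sum_powersetCard_succ_prod [CommSemiring R] (b : ι → R) (r : ℕ) :
    (r + 1 : R) * ∑ U ∈ S.powersetCard (r + 1), ∏ j ∈ U, b j =
      ∑ W ∈ S.powersetCard r, (∑ i ∈ S \ W, b i) * ∏ j ∈ W, b j := by
  simp_rw [sum_mul, ← sum_powersetCard_succ_sum_erase, mul_sum]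
  refine sum_congr rfl fun U hU => ?_
  rw [← Nat.cast_add_one, ← (mem_powersetCard.mp hU).2, ← nsmul_eq_mul, ← sum_const]
  exact sum_congr rfl fun i hi => (mul_prod_erase U b hi).symm

theorem sum_powersetCard_succ_sum_mul_prod [CommSemiring R] (b : ι → R) (r : ℕ) :
    ∑ U ∈ S.powersetCard (r + 1), (∑ i ∈ U, b i) * ∏ j ∈ U, b j =
      ∑ W ∈ S.powersetCard r, (∑ i ∈ S \ W, b i ^ 2) * ∏ j ∈ W, b j := by
  simp_rw [sum_mul, ← sum_powersetCard_succ_sum_erase]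
  refine sum_congr rfl fun U _ => sum_congr rfl fun i hi => ?_
  rw [← mul_prod_erase U b hi, sq, mul_assoc]

theorem succ_mul_sum_powersetCard_succ_sum_sdiff_mul_prod [CommRing R] (b : ι → R) (r : ℕ) :
    (r + 1 : R) * ∑ U ∈ S.powersetCard (r + 1), (∑ i ∈ S \ U, b i) * ∏ j ∈ U, b j =
      ∑ W ∈ S.powersetCard r,
        ((∑ i ∈ S \ W, b i) ^ 2 - ∑ i ∈ S \ W, b i ^ 2) * ∏ j ∈ W, b j := by
  have key := sum_powersetCard_succ_sum_erase S r
    fun W j => b j * ((∑ i ∈ S \ W, b i) - b j) * ∏ j' ∈ W, b j'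
  have hterm : ∀ U ∈ S.powersetCard (r + 1), ∀ j ∈ U,
      b j * ((∑ i ∈ S \ U.erase j, b i) - b j) * ∏ j' ∈ U.erase j, b j' =
        (∑ i ∈ S \ U, b i) * ∏ j' ∈ U, b j' := by
    intro U hU j hj
    have hjSU : j ∉ S \ U := fun h => (mem_sdiff.mp h).2 hj
    rw [sdiff_erase ((mem_powersetCard.mp hU).1 hj), sum_insert hjSU, ← mul_prod_erase U b hj]
    ring
  rw [sum_congr rfl fun U hU => sum_congr rfl (hterm U hU)] at key
  rw [mul_sum]
  convert key using 2 with U hU W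
  · rw [sum_const, (mem_powersetCard.mp hU).2, nsmul_eq_mul]
    push_cast
    ring
  · simp_rw [← sum_mul, mul_sub, sum_sub_distrib, ← sum_mul, sq]

theorem card_mul_sum_powersetCard_succ_prod_le (b : ι → ℝ) (hb : ∀ i ∈ S, 0 ≤ b i) (k : ℕ) :
    #S * ((k + 1) * ∑ U ∈ S.powersetCard (k + 1), ∏ j ∈ U, b j) ≤
      (#S - k) * ((∑ i ∈ S, b i) * ∑ T ∈ S.powersetCard k, ∏ j ∈ T, b j) := by
  have hsplit : (∑ i ∈ S, b i) * ∑ T ∈ S.powersetCard k, ∏ j ∈ T, b j =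
      (k + 1) * ∑ U ∈ S.powersetCard (k + 1), ∏ j ∈ U, b j +
        ∑ T ∈ S.powersetCard k, (∑ i ∈ T, b i) * ∏ j ∈ T, b j := by
    rw [succ_mul_sum_powersetCard_succ_prod, mul_sum, ← sum_add_distrib]
    refine sum_congr rfl fun T hT => ?_
    rw [← add_mul, sum_sdiff (mem_powersetCard.mp hT).1]
  -- Newton-type inequality; for `k = l + 1` it is Cauchy–Schwarz on each complement `S \ W`.
  have hnewton : k * ((k + 1) * ∑ U ∈ S.powersetCard (k + 1), ∏ j ∈ U, b j) ≤
      (#S - k) * ∑ T ∈ S.powersetCard k, (∑ i ∈ T, b i) * ∏ j ∈ T, b j := by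
    cases k with
    | zero => simp
    | succ l =>
      have hsucc := succ_mul_sum_powersetCard_succ_prod S b (l + 1)
      push_cast at hsucc ⊢
      rw [hsucc, succ_mul_sum_powersetCard_succ_sum_sdiff_mul_prod,
        sum_powersetCard_succ_sum_mul_prod, mul_sum]
      refine sum_le_sum fun W hW => ?_
      obtain ⟨hWS, hWc⟩ := mem_powersetCard.mp hW
      have hcs := sq_sum_le_card_mul_sum_sq (s := S \ W) (f := b)
      rw [card_sdiff_of_subset hWS, hWc, Nat.cast_sub (hWc ▸ card_le_card hWS)] at hcs
      rw [← mul_assoc]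
      exact mul_le_mul_of_nonneg_right (by linarith) (prod_nonneg fun j hj => hb j (hWS hj))
  rw [hsplit]
  linarith

theorem sum_powersetCard_prod_mul_card_pow_le (b : ι → ℝ) (hb : ∀ i ∈ S, 0 ≤ b i) (k : ℕ) :
    (∑ T ∈ S.powersetCard k, ∏ j ∈ T, b j) * #S ^ k ≤ (#S).choose k * (∑ i ∈ S, b i) ^ k := by
  induction k with
  | zero => simp
  | succ k ih =>
    rcases lt_or_ge #S (k + 1) with hk | hk
    · simp [powersetCard_eq_empty.mpr hk, Nat.choose_eq_zero_of_lt hk]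
    have hchoose : ((#S).choose (k + 1) : ℝ) * (k + 1) = (#S).choose k * (#S - k) := by
      have h : (((#S).choose (k + 1) * (k + 1) : ℕ) : ℝ) = (((#S).choose k * (#S - k) : ℕ) : ℝ) :=
        congrArg _ (Nat.choose_succ_right_eq #S k)
      push_cast [Nat.cast_sub (Nat.le_of_succ_le hk)] at h
      exact h
    refine le_of_mul_le_mul_left ?_ (by positivity : (0 : ℝ) < k + 1)
    calc (k + 1) * ((∑ T ∈ S.powersetCard (k + 1), ∏ j ∈ T, b j) * #S ^ (k + 1))
        = #S * ((k + 1) * ∑ U ∈ S.powersetCard (k + 1), ∏ j ∈ U, b j) * #S ^ k := by ring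
      _ ≤ (#S - k) * ((∑ i ∈ S, b i) * ∑ T ∈ S.powersetCard k, ∏ j ∈ T, b j) * #S ^ k :=
        mul_le_mul_of_nonneg_right (card_mul_sum_powersetCard_succ_prod_le S b hb k)
          (by positivity)
      _ = (#S - k) * (∑ i ∈ S, b i) * ((∑ T ∈ S.powersetCard k, ∏ j ∈ T, b j) * #S ^ k) := by
        ring
      _ ≤ (#S - k) * (∑ i ∈ S, b i) * ((#S).choose k * (∑ i ∈ S, b i) ^ k) := by
        have : (0 : ℝ) ≤ #S - k := by
          rw [sub_nonneg]; exact_mod_cast Nat.le_of_succ_le hk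
        have := sum_nonneg hb
        gcongr
      _ = (k + 1) * ((#S).choose (k + 1) * (∑ i ∈ S, b i) ^ (k + 1)) := by
        linear_combination (-(∑ i ∈ S, b i) ^ (k + 1)) * hchoose

end Maclaurin

open ProbabilityTheory in
theorem sum_exp_le_card_mul_exp_of_sum_eq_zero {ι : Type*} (S : Finset ι) (c : ι → ℝ) {D : ℝ}
    (hsum : ∑ i ∈ S, c i = 0) (hc : ∀ i ∈ S, ∀ j ∈ S, (c i - c j) ^ 2 ≤ D) :
    ∑ i ∈ S, Real.exp (c i) ≤ #S * Real.exp (D / 8) := by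
  rcases S.eq_empty_or_nonempty with rfl | hS
  · simp
  -- Hoeffding's lemma is applied to the empirical distribution of the values `c i`.
  set μ : Measure ℝ := (#S : ENNReal)⁻¹ • ∑ i ∈ S, Measure.dirac (c i) with hμ
  have hcard : (#S : ENNReal) ≠ 0 := by simp [hS.ne_empty]
  have hμ_apply (s : Set ℝ) : μ s = (#S : ENNReal)⁻¹ * ∑ i ∈ S, s.indicator 1 (c i) := by
    simp [hμ, Measure.dirac_apply]
  have : IsProbabilityMeasure μ := ⟨by
    rw [hμ_apply]; simp [ENNReal.inv_mul_cancel hcard (ENNReal.natCast_ne_top _)]⟩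
  have hint (f : ℝ → ℝ) : ∫ x, f x ∂μ = (∑ i ∈ S, f (c i)) / #S := by
    rw [hμ, integral_smul_measure,
      integral_finsetSum_measure fun i _ => integrable_dirac enorm_lt_top]
    simp [integral_dirac, div_eq_inv_mul]
  obtain ⟨i, hi, hi_max⟩ := S.exists_mem_eq_sup' hS c
  obtain ⟨j, hj, hj_min⟩ := S.exists_mem_eq_inf' hS c
  have hIcc : ∀ᵐ x ∂μ, x ∈ Set.Icc (S.inf' hS c) (S.sup' hS c) := by
    rw [ae_iff, hμ_apply, sum_eq_zero fun k hk => ?_, mul_zero]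
    exact Set.indicator_of_notMem (not_not_intro ⟨inf'_le c hk, le_sup' c hk⟩) _
  have hmean : μ[id] = 0 := by simp [hint, hsum]
  have hoeffding := (hasSubgaussianMGF_of_mem_Icc_of_integral_eq_zero aemeasurable_id hIcc
    hmean).mgf_le 1
  rw [mgf, hint] at hoeffding
  have hwidth : (((‖S.sup' hS c - S.inf' hS c‖₊ / 2) ^ 2 : NNReal) : ℝ) * 1 ^ 2 / 2 ≤ D / 8 := by
    have := hc i hi j hj
    rw [← hi_max, ← hj_min] at this
    push_cast
    rw [Real.norm_eq_abs, div_pow, sq_abs]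
    linarith
  have hcard_pos : (0 : ℝ) < #S := by exact_mod_cast hS.card_pos
  simp only [one_mul, id] at hoeffding
  rw [div_le_iff₀' hcard_pos] at hoeffding
  exact hoeffding.trans (by gcongr)

theorem sum_powersetCard_exp_sum_le {ι : Type*} (S : Finset ι) (c : ι → ℝ) {D : ℝ}
    (hsum : ∑ i ∈ S, c i = 0) (hc : ∀ i ∈ S, ∀ j ∈ S, (c i - c j) ^ 2 ≤ D) (k : ℕ) :
    ∑ T ∈ S.powersetCard k, Real.exp (∑ j ∈ T, c j) ≤ (#S).choose k * Real.exp (k * D / 8) := by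
  classical
  rcases S.eq_empty_or_nonempty with rfl | hS
  · cases k with
    | zero => simp
    | succ k => simp [powersetCard_eq_empty.mpr (card_empty.trans_lt k.succ_pos)]
  have hpow : (0 : ℝ) < #S ^ k := by have := hS.card_pos; positivity
  refine le_of_mul_le_mul_right ?_ hpow
  simp_rw [Real.exp_sum]
  calc (∑ T ∈ S.powersetCard k, ∏ j ∈ T, Real.exp (c j)) * #S ^ k
      ≤ (#S).choose k * (∑ i ∈ S, Real.exp (c i)) ^ k :=
        sum_powersetCard_prod_mul_card_pow_le S _ (fun i _ => (Real.exp_pos _).le) k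
    _ ≤ (#S).choose k * (#S * Real.exp (D / 8)) ^ k := by
        gcongr
        exact sum_exp_le_card_mul_exp_of_sum_eq_zero S c hsum hc
    _ = (#S).choose k * Real.exp (k * D / 8) * #S ^ k := by
        rw [mul_pow, ← Real.exp_nat_mul, mul_div_assoc]
        ring

theorem Matrix.PosSemidef.sq_vecMul_sub_vecMul_le {ι : Type*} [Fintype ι] [DecidableEq ι]
    {K : Matrix ι ι ℝ} (hK : K.PosSemidef) {M : ℝ} (hM : ∀ a b, |K a b| ≤ M) (u : ι → ℝ)
    (i j : ι) : ((u ᵥ* K) i - (u ᵥ* K) j) ^ 2 ≤ 4 * M * (u ⬝ᵥ K *ᵥ u) := by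
  set w : ι → ℝ := Pi.single i 1 - Pi.single j 1
  have hsymm (x y : ι → ℝ) : x ⬝ᵥ K *ᵥ y = y ⬝ᵥ K *ᵥ x := by
    rw [dotProduct_mulVec, dotProduct_comm, ← mulVec_transpose,
      ← conjTranspose_eq_transpose_of_trivial, hK.isHermitian.eq]
  have huw : (u ᵥ* K) i - (u ᵥ* K) j = u ⬝ᵥ K *ᵥ w := by
    simp [w, dotProduct_mulVec, dotProduct_sub]
  have hww : w ⬝ᵥ K *ᵥ w = K i i - K i j - (K j i - K j j) := by
    simp [w, mulVec_sub, sub_dotProduct, dotProduct_sub]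
    ring
  have hcs := (toBilin' K).apply_mul_apply_le_of_forall_zero_le
    (fun x => by simpa [toBilin'_apply'] using hK.dotProduct_mulVec_nonneg x) u w
  simp only [toBilin'_apply'] at hcs
  rw [← hsymm u w] at hcs
  have hQ : 0 ≤ u ⬝ᵥ K *ᵥ u := hK.dotProduct_mulVec_nonneg u
  have hw4 : w ⬝ᵥ K *ᵥ w ≤ 4 * M := by
    have := abs_le.mp (hM i i); have := abs_le.mp (hM i j)
    have := abs_le.mp (hM j i); have := abs_le.mp (hM j j)
    rw [hww]; linarith
  rw [huw, sq]
  nlinarith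

theorem integral_comp_eq_sum_measureReal {Ω α : Type*} [MeasurableSpace Ω] {μ : Measure Ω}
    [IsFiniteMeasure μ] {s : Finset α} {X : Ω → α} (hXs : ∀ ω, X ω ∈ s)
    (hX : ∀ a ∈ s, MeasurableSet {ω | X ω = a}) (g : α → ℝ) :
    ∫ ω, g (X ω) ∂μ = ∑ a ∈ s, μ.real {ω | X ω = a} * g a := by
  classical
  have hsplit : (fun ω => g (X ω)) = fun ω => ∑ a ∈ s, {ω | X ω = a}.indicator (fun _ => g a) ω := by
    funext ω
    rw [sum_eq_single_of_mem (X ω) (hXs ω)]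
    · simp
    · exact fun a _ ha => Set.indicator_of_notMem (fun h : X ω = a => ha h.symm) _
  rw [hsplit, integral_finsetSum _ fun a ha => (integrable_const _).indicator (hX a ha)]
  exact sum_congr rfl fun a ha => by rw [integral_indicator_const _ (hX a ha), smul_eq_mul]

theorem integral_comp_eq_sum_powersetCard_div_choose {Ω α : Type*} [MeasurableSpace Ω]
    {μ : Measure Ω} [IsFiniteMeasure μ] {S : Finset α} {k : ℕ} {X : Ω → Finset α}
    (hX : ∀ ω, X ω ∈ S.powersetCard k) (hmeas : ∀ T ∈ S.powersetCard k, MeasurableSet {ω | X ω = T})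
    (hunif : ∀ T ∈ S.powersetCard k, μ {ω | X ω = T} = ENNReal.ofReal (1 / (#S).choose k))
    (g : Finset α → ℝ) :
    ∫ ω, g (X ω) ∂μ = (∑ T ∈ S.powersetCard k, g T) / (#S).choose k := by
  rw [integral_comp_eq_sum_measureReal hX hmeas, sum_div]
  refine sum_congr rfl fun T hT => ?_
  rw [measureReal_def, hunif T hT, ENNReal.toReal_ofReal (by positivity)]
  ring

theorem le_ciSup_ciSup_of_finite {α ι κ : Type*} [ConditionallyCompleteLattice α] [Finite ι]
    [Finite κ] (f : ι → κ → α)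
    (a : ι) (b : κ) : f a b ≤ ⨆ i, ⨆ j, f i j :=
  (le_ciSup (f := f a) (Set.finite_range _).bddAbove b).trans
    (le_ciSup (f := fun i => ⨆ j, f i j) (Set.finite_range _).bddAbove a)

theorem dotProduct_probVec {n : ℕ} (v : Fin n → ℝ) (S : Finset (Fin n)) :
    v ⬝ᵥ probVec S = (∑ i ∈ S, v i) / #S := by
  simp [probVec, dotProduct, mul_ite, sum_ite_mem, div_eq_mul_inv, sum_mul]

theorem dotProduct_probVec_sub_probVec {n : ℕ} (v : Fin n → ℝ) (S : Finset (Fin n))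
    {T : Finset (Fin n)} (hT : T.Nonempty) :
    v ⬝ᵥ (probVec S - probVec T) = ∑ j ∈ T, ((∑ i ∈ S, v i) / #S - v j) / #T := by
  have : (#T : ℝ) ≠ 0 := by exact_mod_cast hT.card_pos.ne'
  rw [dotProduct_sub, dotProduct_probVec, dotProduct_probVec, ← sum_div, sum_sub_distrib,
    sum_const, nsmul_eq_mul]
  field_simp

theorem stmt1_general {n : ℕ} {Ω : Type*} [MeasureSpace Ω]
    [IsProbabilityMeasure (volume : Measure Ω)]
    (Sin : Finset (Fin n)) (nin nout : ℕ)
    (hnin : Sin.card = nin) (hnout1 : 1 ≤ nout) (hnout2 : nout ≤ nin)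
    (Sout : Ω → Finset (Fin n))
    (hsub : ∀ ω, Sout ω ⊆ Sin) (hcard : ∀ ω, (Sout ω).card = nout)
    (hmeas : ∀ T : Finset (Fin n), MeasurableSet {ω | Sout ω = T})
    (hunif : ∀ T : Finset (Fin n), T ⊆ Sin → T.card = nout →
      volume {ω | Sout ω = T} = ENNReal.ofReal (1 / (nin.choose nout : ℝ)))
    (K : Matrix (Fin n) (Fin n) ℝ) (hK : K.PosSemidef) :
    ∀ u : Fin n → ℝ,
      (∫ ω, Real.exp (u ⬝ᵥ (K *ᵥ (probVec Sin - probVec (Sout ω))))) ≤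
        Real.exp ((⨆ i, ⨆ j, |K i j|) / (2 * (nout : ℝ)) * (u ⬝ᵥ (K *ᵥ u))) := by
  intro u
  subst hnin
  set v := u ᵥ* K
  set c : Fin n → ℝ := fun j => ((∑ i ∈ Sin, v i) / #Sin - v j) / nout
  have hsum : ∑ j ∈ Sin, c j = 0 := by
    have : (#Sin : ℝ) ≠ 0 := by exact_mod_cast (by omega : #Sin ≠ 0)
    simp only [c, ← sum_div, sum_sub_distrib, sum_const, nsmul_eq_mul]
    field_simp
    ring
  have hc : ∀ i ∈ Sin, ∀ j ∈ Sin,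
      (c i - c j) ^ 2 ≤ 4 * (⨆ i, ⨆ j, |K i j|) * (u ⬝ᵥ K *ᵥ u) / nout ^ 2 := by
    intro i _ j _
    rw [show c i - c j = (v j - v i) / nout by simp only [c]; ring, div_pow]
    gcongr
    exact hK.sq_vecMul_sub_vecMul_le (le_ciSup_ciSup_of_finite fun a b => |K a b|) u j i
  have hexp : ∀ T ∈ Sin.powersetCard nout,
      Real.exp (u ⬝ᵥ K *ᵥ (probVec Sin - probVec T)) = Real.exp (∑ j ∈ T, c j) := by
    intro T hT
    have hTc := (mem_powersetCard.mp hT).2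
    rw [dotProduct_mulVec, dotProduct_probVec_sub_probVec _ _ (card_pos.mp (hTc ▸ hnout1)), hTc]
  rw [integral_comp_eq_sum_powersetCard_div_choose
    (fun ω => mem_powersetCard.mpr ⟨hsub ω, hcard ω⟩) (fun T _ => hmeas T)
    (fun T hT => hunif T (mem_powersetCard.mp hT).1 (mem_powersetCard.mp hT).2)
    fun T => Real.exp (u ⬝ᵥ K *ᵥ (probVec Sin - probVec T)), sum_congr rfl hexp,
    div_le_iff₀' (by exact_mod_cast Nat.choose_pos hnout2)]
  refine (sum_powersetCard_exp_sum_le Sin c hsum hc nout).trans_eq ?_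
  have : (nout : ℝ) ≠ 0 := by exact_mod_cast (by omega : nout ≠ 0)
  congr 2
  field_simp
  ring

theorem stmt1 {n : ℕ} {Ω : Type*} [MeasureSpace Ω]
    [IsProbabilityMeasure (volume : Measure Ω)]
    (Sin : Finset (Fin n)) (nin nout : ℕ)
    (hnin : Sin.card = nin) (hnin2 : 2 ≤ nin) (hnout1 : 1 ≤ nout) (hnout2 : nout ≤ nin)
    (Sout : Ω → Finset (Fin n))
    (hsub : ∀ ω, Sout ω ⊆ Sin) (hcard : ∀ ω, (Sout ω).card = nout)
    (hmeas : ∀ T : Finset (Fin n), MeasurableSet {ω | Sout ω = T})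
    (hunif : ∀ T : Finset (Fin n), T ⊆ Sin → T.card = nout →
      volume {ω | Sout ω = T} = ENNReal.ofReal (1 / (nin.choose nout : ℝ)))
    (K : Matrix (Fin n) (Fin n) ℝ) (hK : K.PosSemidef) :
    ∀ u : Fin n → ℝ,
      (∫ ω, Real.exp (u ⬝ᵥ (K *ᵥ (probVec Sin - probVec (Sout ω))))) ≤
        Real.exp ((⨆ i, ⨆ j, |K i j|) / (2 * (nout : ℝ)) * (u ⬝ᵥ (K *ᵥ u))) :=
  stmt1_general Sin nin nout hnin hnout1 hnout2 Sout hsub hcard hmeas hunif K hK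

end
end

section
/- Let Z ⊆ ℝ^d be a nonempty finite set with R := max_{z∈Z} ‖z‖₂ > 0, let r be the rank of the matrix whose rows are the elements of Z, let ν > 0 and L_k > 0, and let κ: Z → [0,∞) with max_{z∈Z} κ(z) > 0 (interpreted as the kernel diagonal values κ(z) = k(z,z)). Define the metric ρ(z,z') := ν·√(8/3)·min( 2·max_{w∈Z} √(κ(w)), √(2·L_k·‖z − z'‖₂) ) on Z, and set c := ν·√(32·R·L_k/3) and D := min( c, ν·√(32/3)·max_{w∈Z} √(κ(w)) ). Then: (i) for every u > 0, the u-covering number of Z with respect to ρ satisfies N(u; Z, ρ) ≤ (1 + c²/u²)^r; (ii) the diameter of Z with respect to ρ is at most D; and (iii) the entropy integral satisfies J(Z, ρ) := ∫₀^{diam(Z,ρ)} √(log(1 + N(u; Z, ρ))) du ≤ D·√(2·r·log(√3·e·c/D)). -/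
/-!
A maximal Euclidean `ε`-separated subset of `Z` is an `ε`-net of `Z`; it lies in the
`r`-dimensional span of `Z`, where the disjoint `ε/2`-balls around its points fill at most the
ball of radius `R + ε/2`, so it has at most `(1 + 2R/ε)^r` points. As
`ρ(z, z') ≤ ν √(16 L_k ‖z - z'‖ / 3)`, a Euclidean net at scale `ε = 3u²/(16ν²L_k)` is a `ρ`-net
at scale `u`, and then `2R/ε = c²/u²`.

For `u ≤ D ≤ c` this gives `log (1 + N(u)) ≤ 2r log (√3 c / u)`. Bounding `√·` by its tangent
line at `t² = 2r log (√3 e c / D)` makes the integrand affine in `log u`, and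
`∫₀^D log = D log D - D` evaluates the resulting integral to exactly `D t`.
-/

open MeasureTheory Metric Module Real Set
open scoped NNReal ENNReal

theorem Finset.card_le_of_pairwise_lt_dist {F : Type*} [NormedAddCommGroup F] [NormedSpace ℝ F]
    [FiniteDimensional ℝ F] {C : Finset F} {ε R : ℝ} (hε : 0 < ε) (hR : 0 ≤ R)
    (hsep : (C : Set F).Pairwise fun a b => ε < dist a b) (hC : ∀ c ∈ C, ‖c‖ ≤ R) :
    (C.card : ℝ) ≤ (1 + 2 * R / ε) ^ finrank ℝ F := by
  borelize F
  set μ : Measure F := Measure.addHaar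
  have hq : 0 < 1 + 2 * R / ε := by positivity
  have hdisj : (C : Set F).PairwiseDisjoint fun c => ball c (ε / 2) := fun a ha b hb hab =>
    ball_disjoint_ball (by linarith [hsep ha hb hab])
  have hsub : ⋃ c ∈ C, ball c (ε / 2) ⊆ ball 0 ((1 + 2 * R / ε) * (ε / 2)) := by
    refine iUnion₂_subset fun c hc x hx => ?_
    rw [mem_ball_zero_iff]
    have : (1 + 2 * R / ε) * (ε / 2) = R + ε / 2 := by field_simp; ring
    linarith [norm_le_norm_add_norm_sub' x c, hC c hc, mem_ball_iff_norm.1 hx]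
  have hvol : (C.card : ℝ≥0∞) * μ (ball 0 (ε / 2)) ≤
      ENNReal.ofReal ((1 + 2 * R / ε) ^ finrank ℝ F) * μ (ball 0 (ε / 2)) := calc
    (C.card : ℝ≥0∞) * μ (ball 0 (ε / 2)) = ∑ c ∈ C, μ (ball c (ε / 2)) := by
      simp [Measure.addHaar_ball_center]
    _ = μ (⋃ c ∈ C, ball c (ε / 2)) :=
      (measure_biUnion_finset hdisj fun _ _ => measurableSet_ball).symm
    _ ≤ _ := (measure_mono hsub).trans_eq (Measure.addHaar_ball_mul_of_pos μ 0 hq _)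
  have := (ENNReal.mul_le_mul_iff_left (measure_ball_pos μ 0 (half_pos hε)).ne'
    measure_ball_lt_top.ne).1 hvol
  rwa [← ENNReal.ofReal_natCast, ENNReal.ofReal_le_ofReal_iff (by positivity)] at this

theorem Finset.card_le_of_pairwise_lt_dist_of_subset_span {E : Type*} [NormedAddCommGroup E]
    [NormedSpace ℝ E] {Z C : Finset E} (hCZ : C ⊆ Z) {ε R : ℝ} (hε : 0 < ε) (hR : 0 ≤ R)
    (hsep : (C : Set E).Pairwise fun a b => ε < dist a b) (hC : ∀ c ∈ C, ‖c‖ ≤ R) :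
    (C.card : ℝ) ≤ (1 + 2 * R / ε) ^ finrank ℝ (Submodule.span ℝ (Z : Set E)) := by
  classical
  set S := Submodule.span ℝ (Z : Set E)
  have hcard : (C.subtype (· ∈ S)).card = C.card := by
    rw [card_subtype, filter_true_of_mem (p := (· ∈ S)) fun c hc => Submodule.subset_span (hCZ hc)]
  rw [← hcard]
  refine card_le_of_pairwise_lt_dist hε hR (fun a ha b hb hab => ?_)
    fun c hc => hC c (mem_subtype.1 hc)
  exact hsep (mem_subtype.1 ha) (mem_subtype.1 hb) (Subtype.coe_injective.ne hab)

theorem Finset.exists_subset_forall_dist_le_card_le {E : Type*} [NormedAddCommGroup E]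
    [NormedSpace ℝ E] (Z : Finset E) {ε R : ℝ} (hε : 0 < ε) (hR : 0 ≤ R)
    (hZ : ∀ z ∈ Z, ‖z‖ ≤ R) :
    ∃ C ⊆ Z, (∀ z ∈ Z, ∃ c ∈ C, dist z c ≤ ε) ∧
      (C.card : ℝ) ≤ (1 + 2 * R / ε) ^ finrank ℝ (Submodule.span ℝ (Z : Set E)) := by
  lift ε to ℝ≥0 using hε.le
  have hpack : packingNumber ε (Z : Set E) ≠ ⊤ :=
    ne_top_of_le_ne_top Z.finite_toSet.encard_lt_top.ne (packingNumber_le_encard_self _)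
  set C := (Z.finite_toSet.subset (maximalSeparatedSet_subset (ε := ε))).toFinset
  have hCZ : C ⊆ Z := by simpa [C] using maximalSeparatedSet_subset
  refine ⟨C, hCZ, fun z hz => ?_, card_le_of_pairwise_lt_dist_of_subset_span hCZ hε hR ?_ ?_⟩
  · simpa [C] using isCover_iff_subset_iUnion_closedBall.1 (isCover_maximalSeparatedSet hpack) hz
  · intro a ha b hb hab
    have := isSeparated_maximalSeparatedSet (ε := ε) (A := (Z : Set E))
      (by simpa [C] using ha) (by simpa [C] using hb) hab
    simpa [edist_dist] using this
  · exact fun c hc => hZ c (hCZ hc)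

theorem Matrix.rank_of_finset_eq_finrank_span {d : ℕ} (Z : Finset (EuclideanSpace ℝ (Fin d))) :
    (Matrix.of fun (z : {z // z ∈ Z}) (j : Fin d) => (z.1 : EuclideanSpace ℝ (Fin d)) j).rank =
      finrank ℝ (Submodule.span ℝ (Z : Set (EuclideanSpace ℝ (Fin d)))) := by
  have hrows : Set.range (Matrix.of fun (z : {z // z ∈ Z}) (j : Fin d) => z.1 j) =
      (WithLp.linearEquiv 2 ℝ (Fin d → ℝ) : EuclideanSpace ℝ (Fin d) →ₗ[ℝ] Fin d → ℝ) '' Z := by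
    ext x
    constructor
    · rintro ⟨z, rfl⟩
      exact ⟨z.1, z.2, rfl⟩
    · rintro ⟨z, hz, rfl⟩
      exact ⟨⟨z, hz⟩, rfl⟩
  rw [Matrix.rank_eq_finrank_span_row, Matrix.row, hrows, ← Submodule.map_span,
    LinearEquiv.finrank_map_eq]

theorem one_le_finrank_span_of_mem {E : Type*} [NormedAddCommGroup E] [NormedSpace ℝ E]
    {Z : Finset E} {z : E} (hz : z ∈ Z) (hz0 : z ≠ 0) :
    1 ≤ finrank ℝ (Submodule.span ℝ (Z : Set E)) := by
  rw [← finrank_span_singleton (K := ℝ) hz0]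
  exact Submodule.finrank_mono (Submodule.span_mono (by simpa using hz))

namespace Finset

variable {α : Type*}

noncomputable def coveringNumber (Z : Finset α) (ρ : α → α → ℝ) (u : ℝ) : ℕ :=
  sInf {k : ℕ | ∃ C : Finset α, C ⊆ Z ∧ C.card = k ∧ ∀ z ∈ Z, ∃ c ∈ C, ρ z c ≤ u}

theorem coveringNumber_le_card {Z C : Finset α} {ρ : α → α → ℝ} {u : ℝ} (hCZ : C ⊆ Z)
    (hC : ∀ z ∈ Z, ∃ c ∈ C, ρ z c ≤ u) : Z.coveringNumber ρ u ≤ C.card :=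
  Nat.sInf_le ⟨C, hCZ, rfl, hC⟩

theorem coveringNumber_antitoneOn {Z : Finset α} {ρ : α → α → ℝ} (hρ : ∀ z ∈ Z, ρ z z ≤ 0) :
    AntitoneOn (Z.coveringNumber ρ) (Set.Ici 0) := by
  intro a ha b _ hab
  obtain ⟨C, hCZ, hC, hcov⟩ := Nat.sInf_mem
    (s := {k : ℕ | ∃ C : Finset α, C ⊆ Z ∧ C.card = k ∧ ∀ z ∈ Z, ∃ c ∈ C, ρ z c ≤ a})
    ⟨Z.card, Z, subset_rfl, rfl, fun z hz => ⟨z, hz, (hρ z hz).trans ha⟩⟩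
  refine (coveringNumber_le_card hCZ fun z hz => ?_).trans_eq hC
  obtain ⟨c, hc, hzc⟩ := hcov z hz
  exact ⟨c, hc, hzc.trans hab⟩

end Finset

section BoundedHolderMetric

variable {E : Type*} [NormedAddCommGroup E] {ν Lk s : ℝ}

/-- `s` stands for `max_{w ∈ Z} √κ(w)`. -/
noncomputable def boundedHolderMetric (ν Lk s : ℝ) (z z' : E) : ℝ :=
  ν * √(8 / 3) * min (2 * s) (√(2 * Lk * ‖z - z'‖))

theorem boundedHolderMetric_self (hs : 0 ≤ s) (z : E) : boundedHolderMetric ν Lk s z z = 0 := by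
  simp [boundedHolderMetric, hs]

theorem boundedHolderMetric_le_sqrt (hν : 0 ≤ ν) (z z' : E) :
    boundedHolderMetric ν Lk s z z' ≤ ν * √(16 * Lk * ‖z - z'‖ / 3) := calc
  boundedHolderMetric ν Lk s z z' ≤ ν * √(8 / 3) * √(2 * Lk * ‖z - z'‖) := by
    unfold boundedHolderMetric; gcongr; exact min_le_right _ _
  _ = ν * √(16 * Lk * ‖z - z'‖ / 3) := by
    rw [mul_assoc, ← sqrt_mul (by norm_num)]; ring_nf

theorem boundedHolderMetric_le_of_norm_sub_le (hν : 0 < ν) (hLk : 0 < Lk) {u : ℝ} (hu : 0 ≤ u)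
    {z z' : E} (h : ‖z - z'‖ ≤ 3 * u ^ 2 / (16 * ν ^ 2 * Lk)) :
    boundedHolderMetric ν Lk s z z' ≤ u := calc
  boundedHolderMetric ν Lk s z z' ≤ ν * √(16 * Lk * (3 * u ^ 2 / (16 * ν ^ 2 * Lk)) / 3) := by
    refine (boundedHolderMetric_le_sqrt hν.le z z').trans ?_
    gcongr
  _ = u := by
    rw [show 16 * Lk * (3 * u ^ 2 / (16 * ν ^ 2 * Lk)) / 3 = (u / ν) ^ 2 by field_simp,
      sqrt_sq (by positivity)]
    field_simp

theorem boundedHolderMetric_le_min (hν : 0 ≤ ν) (hLk : 0 ≤ Lk) {R : ℝ} {z z' : E} (hz : ‖z‖ ≤ R)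
    (hz' : ‖z'‖ ≤ R) :
    boundedHolderMetric ν Lk s z z' ≤ min (ν * √(32 * R * Lk / 3)) (ν * √(32 / 3) * s) := by
  refine le_min ((boundedHolderMetric_le_sqrt hν z z').trans ?_) ?_
  · have := norm_sub_le z z'
    gcongr ν * √?_
    nlinarith
  · calc boundedHolderMetric ν Lk s z z' ≤ ν * √(8 / 3) * (2 * s) := by
          unfold boundedHolderMetric; gcongr; exact min_le_left _ _
      _ = ν * √(32 / 3) * s := by
          rw [show (32 : ℝ) / 3 = 2 ^ 2 * (8 / 3) by norm_num, sqrt_mul (by norm_num),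
            sqrt_sq (by norm_num)]
          ring

end BoundedHolderMetric

theorem log_one_add_le_two_mul_log {x c u : ℝ} {r : ℕ} (hx : 0 ≤ x) (hu : 0 < u) (huc : u ≤ c)
    (hr : r ≠ 0) (h : x ≤ (1 + c ^ 2 / u ^ 2) ^ r) :
    log (1 + x) ≤ 2 * r * log (√3 * c / u) := by
  set q := c ^ 2 / u ^ 2
  have hq : 1 ≤ q := (one_le_div (by positivity)).2 (by gcongr)
  have hpow : 1 + x ≤ ((√3 * c / u) ^ 2) ^ r := calc
    1 + x ≤ (1 + q) ^ r + 1 ^ r := by rw [one_pow]; linarith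
    _ ≤ (1 + q + 1) ^ r := pow_add_pow_le (by positivity) zero_le_one hr
    _ ≤ (3 * (c ^ 2 / u ^ 2)) ^ r := by gcongr; linarith
    _ = ((√3 * c / u) ^ 2) ^ r := by
      congr 1
      rw [div_pow, mul_pow, sq_sqrt (by norm_num : (0 : ℝ) ≤ 3), mul_div_assoc]
  calc log (1 + x) ≤ log (((√3 * c / u) ^ 2) ^ r) := log_le_log (by positivity) hpow
    _ = 2 * r * log (√3 * c / u) := by rw [← pow_mul, log_pow]; push_cast; ring

theorem sqrt_le_half_add_div {x t : ℝ} (hx : 0 ≤ x) (ht : 0 < t) : √x ≤ t / 2 + x / (2 * t) := by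
  rw [div_add_div _ _ two_ne_zero (by positivity), le_div_iff₀ (by positivity)]
  nlinarith [sq_nonneg (√x - t), sq_sqrt hx]

theorem integral_le_mul_sqrt_log {f : ℝ → ℝ} {δ D K m : ℝ} (hδ : 0 ≤ δ) (hδD : δ ≤ D)
    (hD : 0 < D) (hDK : D ≤ K) (hm : 0 < m) (hf : IntervalIntegrable f volume 0 δ)
    (hfle : ∀ u ∈ Ioo 0 δ, f u ≤ √(m * log (K / u))) :
    ∫ u in 0..δ, f u ≤ D * √(m * log (exp 1 * K / D)) := by
  have hK : 0 < K := hD.trans_le hDK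
  set t := √(m * log (exp 1 * K / D))
  have hlog : log (exp 1 * K / D) = log K + 1 - log D := by
    rw [log_div (by positivity) hD.ne', log_mul (exp_ne_zero 1) hK.ne', log_exp]; ring
  have hlogKD : log D ≤ log K := log_le_log hD hDK
  have ht2 : t ^ 2 = m * (log K + 1 - log D) := by
    rw [sq_sqrt (by rw [hlog]; nlinarith), hlog]
  have ht : 0 < t := sqrt_pos.2 (by rw [hlog]; nlinarith)
  set g : ℝ → ℝ := fun u => (t / 2 + m * log K / (2 * t)) - m / (2 * t) * log u
  have hg_int : ∀ a b : ℝ, IntervalIntegrable g volume a b := fun a b =>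
    intervalIntegrable_const.sub (intervalIntegral.intervalIntegrable_log'.const_mul _)
  have hfg : ∀ u ∈ Ioo 0 δ, f u ≤ g u := fun u hu => by
    have hlogu : log u ≤ log K := log_le_log hu.1 (by linarith [hu.2])
    have hfu := hfle u hu
    rw [log_div hK.ne' hu.1.ne'] at hfu
    exact hfu.trans ((sqrt_le_half_add_div (by nlinarith) ht).trans_eq (by ring))
  have hg_nonneg : ∀ u ∈ Ioc 0 D, 0 ≤ g u := fun u hu => by
    have : log u ≤ log K := log_le_log hu.1 (hu.2.trans hDK)
    have : 0 ≤ m * (log K - log u) / (2 * t) := by apply div_nonneg <;> nlinarith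
    simp only [g]
    linarith [show m * (log K - log u) / (2 * t) = m * log K / (2 * t) - m / (2 * t) * log u by
      ring]
  calc ∫ u in 0..δ, f u ≤ ∫ u in 0..δ, g u :=
        intervalIntegral.integral_mono_on_of_le_Ioo hδ hf (hg_int 0 δ) hfg
    _ ≤ ∫ u in 0..D, g u := intervalIntegral.integral_mono_interval le_rfl hδ hδD
        ((ae_restrict_iff' measurableSet_Ioc).2 (ae_of_all _ hg_nonneg)) (hg_int 0 D)
    _ = D * t := by
        rw [intervalIntegral.integral_sub intervalIntegrable_const
            (intervalIntegral.intervalIntegrable_log'.const_mul _), intervalIntegral.integral_const,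
          intervalIntegral.integral_const_mul, integral_log_from_zero, smul_eq_mul, sub_zero]
        field_simp
        linear_combination -ht2

theorem integral_sqrt_log_one_add_le {N : ℝ → ℕ} {δ D c : ℝ} {r : ℕ}
    (hN : AntitoneOn N (Ici 0)) (hcover : ∀ u > 0, (N u : ℝ) ≤ (1 + c ^ 2 / u ^ 2) ^ r)
    (hr : r ≠ 0) (hδ : 0 ≤ δ) (hδD : δ ≤ D) (hD : 0 < D) (hDc : D ≤ c) :
    ∫ u in 0..δ, √(log (1 + N u)) ≤ D * √(2 * r * log (√3 * exp 1 * c / D)) := by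
  have hmono : Monotone fun n : ℕ => √(log (1 + n)) := fun a b hab =>
    sqrt_le_sqrt (log_le_log (by positivity) (by gcongr))
  have hint : IntervalIntegrable (fun u => √(log (1 + N u))) volume 0 δ :=
    ((hmono.comp_antitoneOn hN).mono (uIcc_of_le hδ ▸ Icc_subset_Ici_self)).intervalIntegrable
  have hDK : D ≤ √3 * c := hDc.trans (le_mul_of_one_le_left (hD.le.trans hDc) (by norm_num))
  calc _ ≤ D * √(2 * r * log (exp 1 * (√3 * c) / D)) :=
        integral_le_mul_sqrt_log hδ hδD hD hDK (by positivity) hint fun u hu =>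
          sqrt_le_sqrt (log_one_add_le_two_mul_log (Nat.cast_nonneg _) hu.1
            (by linarith [hu.2]) hr (hcover u hu.1))
    _ = _ := by ring_nf

theorem coveringNumber_boundedHolderMetric_le {E : Type*} [NormedAddCommGroup E]
    [NormedSpace ℝ E] (Z : Finset E) {ν Lk s R u : ℝ} (hν : 0 < ν) (hLk : 0 < Lk) (hR : 0 ≤ R)
    (hZ : ∀ z ∈ Z, ‖z‖ ≤ R) (hu : 0 < u) :
    (Z.coveringNumber (boundedHolderMetric ν Lk s) u : ℝ) ≤
      (1 + ν ^ 2 * (32 * R * Lk / 3) / u ^ 2) ^ finrank ℝ (Submodule.span ℝ (Z : Set E)) := by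
  obtain ⟨C, hCZ, hcov, hcard⟩ := Z.exists_subset_forall_dist_le_card_le
    (ε := 3 * u ^ 2 / (16 * ν ^ 2 * Lk)) (by positivity) hR hZ
  have hN := Z.coveringNumber_le_card (ρ := boundedHolderMetric ν Lk s) hCZ fun z hz => by
    obtain ⟨c, hc, hzc⟩ := hcov z hz
    exact ⟨c, hc, boundedHolderMetric_le_of_norm_sub_le hν hLk hu.le (dist_eq_norm z c ▸ hzc)⟩
  calc (Z.coveringNumber (boundedHolderMetric ν Lk s) u : ℝ) ≤ C.card := by exact_mod_cast hN
    _ ≤ _ := hcard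
    _ = _ := by congr 2; field_simp; ring

theorem stmt14_general {d : ℕ} (Z : Finset (EuclideanSpace ℝ (Fin d))) (hZ : Z.Nonempty)
    (R : ℝ) (hR : R = Z.sup' hZ fun z => ‖z‖) (hRpos : 0 < R)
    (r : ℕ)
    (hr : r = (Matrix.of fun (z : {z // z ∈ Z}) (j : Fin d) =>
      (z.1 : EuclideanSpace ℝ (Fin d)) j).rank)
    (ν Lk : ℝ) (hν : 0 < ν) (hLk : 0 < Lk)
    (κ : EuclideanSpace ℝ (Fin d) → ℝ)
    (hκpos : 0 < Z.sup' hZ fun z => κ z)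
    (ρ : EuclideanSpace ℝ (Fin d) → EuclideanSpace ℝ (Fin d) → ℝ)
    (hρ : ∀ z z', ρ z z' = ν * Real.sqrt (8/3) *
      min (2 * Z.sup' hZ fun v => Real.sqrt (κ v)) (Real.sqrt (2 * Lk * ‖z - z'‖)))
    (c D : ℝ) (hc : c = ν * Real.sqrt (32 * R * Lk / 3))
    (hD : D = min c (ν * Real.sqrt (32/3) * Z.sup' hZ fun v => Real.sqrt (κ v)))
    (N : ℝ → ℕ)
    (hN : ∀ u, N u = sInf {k : ℕ |
      ∃ C : Finset (EuclideanSpace ℝ (Fin d)), C ⊆ Z ∧ C.card = k ∧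
        ∀ z ∈ Z, ∃ c' ∈ C, ρ z c' ≤ u})
    (diam : ℝ) (hdiam : IsGreatest {t : ℝ | ∃ z ∈ Z, ∃ z' ∈ Z, t = ρ z z'} diam) :
    (∀ u > 0, (N u : ℝ) ≤ (1 + c^2 / u^2) ^ r) ∧
    diam ≤ D ∧
    (∫ u in (0:ℝ)..diam, Real.sqrt (Real.log (1 + (N u : ℝ)))) ≤
      D * Real.sqrt (2 * (r : ℝ) * Real.log (Real.sqrt 3 * Real.exp 1 * c / D)) := by
  set s := Z.sup' hZ fun v => √(κ v)
  obtain rfl : ρ = boundedHolderMetric ν Lk s := funext₂ hρ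
  obtain rfl : N = Z.coveringNumber (boundedHolderMetric ν Lk s) := funext hN
  have hs : 0 < s := by
    obtain ⟨z, hz, hκz⟩ := (Finset.lt_sup'_iff hZ).1 hκpos
    exact (Finset.lt_sup'_iff hZ).2 ⟨z, hz, sqrt_pos.2 hκz⟩
  have hZR : ∀ z ∈ Z, ‖z‖ ≤ R := hR ▸ fun z hz => Z.le_sup' (‖·‖) hz
  have hr0 : r ≠ 0 := by
    obtain ⟨z, hz, hRz⟩ := Z.exists_mem_eq_sup' hZ (‖·‖)
    rw [hr, Matrix.rank_of_finset_eq_finrank_span, ← Nat.one_le_iff_ne_zero]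
    exact one_le_finrank_span_of_mem hz (norm_pos_iff.1 (by rwa [← hRz, ← hR]))
  have hc0 : 0 < c := hc ▸ by positivity
  have hD0 : 0 < D := hD ▸ lt_min hc0 (by positivity)
  have hDc : D ≤ c := hD ▸ min_le_left _ _
  have hcover : ∀ u > 0,
      (Z.coveringNumber (boundedHolderMetric ν Lk s) u : ℝ) ≤ (1 + c ^ 2 / u ^ 2) ^ r := by
    intro u hu
    rw [hr, Matrix.rank_of_finset_eq_finrank_span, hc, mul_pow, sq_sqrt (by positivity)]
    exact coveringNumber_boundedHolderMetric_le Z hν hLk hRpos.le hZR hu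
  have hdiamD : diam ≤ D := by
    obtain ⟨z, hz, z', hz', rfl⟩ := hdiam.1
    rw [hD, hc]
    exact boundedHolderMetric_le_min hν.le hLk.le (hZR z hz) (hZR z' hz')
  refine ⟨hcover, hdiamD, ?_⟩
  obtain ⟨z₀, hz₀⟩ := hZ
  have hdiam0 : 0 ≤ diam := hdiam.2 ⟨z₀, hz₀, z₀, hz₀, (boundedHolderMetric_self hs.le z₀).symm⟩
  exact integral_sqrt_log_one_add_le (Finset.coveringNumber_antitoneOn fun z _ =>
    (boundedHolderMetric_self hs.le z).le) hcover hr0 hdiam0 hdiamD hD0 hDc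

theorem stmt14 {d : ℕ} (Z : Finset (EuclideanSpace ℝ (Fin d))) (hZ : Z.Nonempty)
    (R : ℝ) (hR : R = Z.sup' hZ fun z => ‖z‖) (hRpos : 0 < R)
    (r : ℕ)
    (hr : r = (Matrix.of fun (z : {z // z ∈ Z}) (j : Fin d) =>
      (z.1 : EuclideanSpace ℝ (Fin d)) j).rank)
    (ν Lk : ℝ) (hν : 0 < ν) (hLk : 0 < Lk)
    (κ : EuclideanSpace ℝ (Fin d) → ℝ) (hκ : ∀ z ∈ Z, 0 ≤ κ z)
    (hκpos : 0 < Z.sup' hZ fun z => κ z)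
    (ρ : EuclideanSpace ℝ (Fin d) → EuclideanSpace ℝ (Fin d) → ℝ)
    (hρ : ∀ z z', ρ z z' = ν * Real.sqrt (8/3) *
      min (2 * Z.sup' hZ fun v => Real.sqrt (κ v)) (Real.sqrt (2 * Lk * ‖z - z'‖)))
    (c D : ℝ) (hc : c = ν * Real.sqrt (32 * R * Lk / 3))
    (hD : D = min c (ν * Real.sqrt (32/3) * Z.sup' hZ fun v => Real.sqrt (κ v)))
    (N : ℝ → ℕ)
    (hN : ∀ u, N u = sInf {k : ℕ |
      ∃ C : Finset (EuclideanSpace ℝ (Fin d)), C ⊆ Z ∧ C.card = k ∧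
        ∀ z ∈ Z, ∃ c' ∈ C, ρ z c' ≤ u})
    (diam : ℝ) (hdiam : IsGreatest {t : ℝ | ∃ z ∈ Z, ∃ z' ∈ Z, t = ρ z z'} diam) :
    (∀ u > 0, (N u : ℝ) ≤ (1 + c^2 / u^2) ^ r) ∧
    diam ≤ D ∧
    (∫ u in (0:ℝ)..diam, Real.sqrt (Real.log (1 + (N u : ℝ)))) ≤
      D * Real.sqrt (2 * (r : ℝ) * Real.log (Real.sqrt 3 * Real.exp 1 * c / D)) :=
  stmt14_general Z hZ R hR hRpos r hr ν Lk hν hLk κ hκpos ρ hρ c D hc hD N hN diam hdiam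
end

section
/- Let n, m, p ≥ 1, let A, Â ∈ ℝ^{n×m} have nonnegative entries with every row sum strictly positive, and let V ∈ ℝ^{m×p}. Let D := diag(A·1_m) and D̂ := diag(Â·1_m), where 1_m is the all-ones vector. Then ‖D̂^{-1} Â V − D^{-1} A V‖_max ≤ min( ‖((1/m)·D)^{-1}‖_max , ‖((1/m)·D̂)^{-1}‖_max ) · ( (1/m)·‖(Â − A)·V‖_max + (1/m)·‖A·1_m − Â·1_m‖_∞ · ‖V‖_max ), where ‖M‖_max denotes the maximum absolute entry of a matrix M and ‖v‖_∞ the maximum absolute entry of a vector v. -/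
/-!
Write `r = (A·1)ᵢ`, `s = (Â·1)ᵢ`, `b = (A V)ᵢₖ`, `b̂ = (Â V)ᵢₖ`. The entry to bound is `s⁻¹ b̂ - r⁻¹ b`, and
`s⁻¹ b̂ - r⁻¹ b = s⁻¹ ((b̂ - b) + (r - s) · r⁻¹ b)`, where `r⁻¹ b` is a convex combination of entries of
`V`, hence at most `‖V‖_max` in absolute value. Exchanging the roles of `A` and `Â` gives the same bound
with `r⁻¹` in front, so the factor is `min r⁻¹ s⁻¹`, and `m r⁻¹`, `m s⁻¹` are diagonal entries of
`((1/m) D)⁻¹` and `((1/m) D̂)⁻¹`.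
-/

open Matrix Finset

noncomputable section

/-- Maximum absolute entry of a matrix. -/
def maxAbs {a b : ℕ} (M : Matrix (Fin a) (Fin b) ℝ) : ℝ := ⨆ i, ⨆ j, |M i j|

lemma abs_le_maxAbs {a b : ℕ} (M : Matrix (Fin a) (Fin b) ℝ) (i : Fin a) (j : Fin b) :
    |M i j| ≤ maxAbs M :=
  (le_ciSup (Finite.bddAbove_range fun j => |M i j|) j).trans
    (le_ciSup (Finite.bddAbove_range fun i => ⨆ j, |M i j|) i)

lemma maxAbs_nonneg {a b : ℕ} (M : Matrix (Fin a) (Fin b) ℝ) : 0 ≤ maxAbs M :=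
  Real.iSup_nonneg fun _ => Real.iSup_nonneg fun _ => abs_nonneg _

lemma maxAbs_le {a b : ℕ} {M : Matrix (Fin a) (Fin b) ℝ} {c : ℝ} (hc : 0 ≤ c)
    (h : ∀ i j, |M i j| ≤ c) : maxAbs M ≤ c :=
  Real.iSup_le (fun i => Real.iSup_le (h i) hc) hc

lemma inv_diagonal_of_ne_zero {l K : Type*} [Fintype l] [DecidableEq l] [Field K] {d : l → K}
    (hd : ∀ i, d i ≠ 0) : (diagonal d)⁻¹ = diagonal d⁻¹ :=
  inv_eq_right_inv <| by
    rw [diagonal_mul_diagonal, ← diagonal_one]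
    exact congrArg diagonal (funext fun i => mul_inv_cancel₀ (hd i))

lemma inv_le_mul_maxAbs_inv_smul_diagonal {n : ℕ} {c : ℝ} {d : Fin n → ℝ} (hc : 0 < c)
    (hd : ∀ i, 0 < d i) (i : Fin n) : (d i)⁻¹ ≤ c * maxAbs (c • diagonal d)⁻¹ := by
  have hentry : ((c • diagonal d)⁻¹) i i = (c * d i)⁻¹ := by
    rw [← diagonal_smul, inv_diagonal_of_ne_zero (d := c • d) fun j => (mul_pos hc (hd j)).ne']
    simp
  calc (d i)⁻¹ = c * (c * d i)⁻¹ := by field_simp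
    _ ≤ c * maxAbs (c • diagonal d)⁻¹ := by
      gcongr
      rw [← hentry]
      exact (le_abs_self _).trans (abs_le_maxAbs _ i i)

lemma abs_mul_apply_le_sum_mul_maxAbs {l : Type*} {m p : ℕ} {A : Matrix l (Fin m) ℝ}
    (hA : ∀ i j, 0 ≤ A i j) (V : Matrix (Fin m) (Fin p) ℝ) (i : l) (k : Fin p) :
    |(A * V) i k| ≤ (∑ j, A i j) * maxAbs V := by
  rw [mul_apply, sum_mul]
  refine (abs_sum_le_sum_abs _ _).trans (sum_le_sum fun j _ => ?_)
  rw [abs_mul, abs_of_nonneg (hA i j)]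
  exact mul_le_mul_of_nonneg_left (abs_le_maxAbs V j k) (hA i j)

lemma abs_inv_mul_sub_inv_mul_le {r s b b' W : ℝ} (hr : 0 < r) (hs : 0 < s)
    (hb : |b| ≤ r * W) : |s⁻¹ * b' - r⁻¹ * b| ≤ s⁻¹ * (|b' - b| + |r - s| * W) := by
  have hbW : |r⁻¹ * b| ≤ W := by
    rw [abs_mul, abs_inv, abs_of_pos hr, inv_mul_le_iff₀ hr]
    exact hb
  have key : s⁻¹ * b' - r⁻¹ * b = s⁻¹ * ((b' - b) + (r - s) * (r⁻¹ * b)) := by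
    field_simp
    ring
  rw [key, abs_mul, abs_inv, abs_of_pos hs]
  gcongr
  calc |(b' - b) + (r - s) * (r⁻¹ * b)| ≤ |b' - b| + |r - s| * |r⁻¹ * b| :=
        (abs_add_le _ _).trans_eq (by rw [abs_mul])
    _ ≤ |b' - b| + |r - s| * W := by gcongr

lemma abs_inv_mul_sub_inv_mul_le_min {r s b b' W : ℝ} (hr : 0 < r) (hs : 0 < s)
    (hb : |b| ≤ r * W) (hb' : |b'| ≤ s * W) :
    |s⁻¹ * b' - r⁻¹ * b| ≤ min r⁻¹ s⁻¹ * (|b' - b| + |r - s| * W) := by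
  have hsym := abs_inv_mul_sub_inv_mul_le (b' := b) hs hr hb'
  rw [abs_sub_comm, abs_sub_comm b, abs_sub_comm s] at hsym
  have hW : 0 ≤ W := nonneg_of_mul_nonneg_right ((abs_nonneg b).trans hb) hr
  rw [min_mul_of_nonneg _ _ (by positivity)]
  exact le_min hsym (abs_inv_mul_sub_inv_mul_le hr hs hb)

lemma abs_inv_diagonal_rowSum_mul_sub_le {l : Type*} [Fintype l] [DecidableEq l] {m p : ℕ}
    {A Ahat : Matrix l (Fin m) ℝ} (hA : ∀ i j, 0 ≤ A i j) (hAhat : ∀ i j, 0 ≤ Ahat i j)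
    (hArow : ∀ i, 0 < ∑ j, A i j) (hAhatrow : ∀ i, 0 < ∑ j, Ahat i j)
    (V : Matrix (Fin m) (Fin p) ℝ) (i : l) (k : Fin p) :
    |((diagonal fun i => ∑ j, Ahat i j)⁻¹ * Ahat * V -
        (diagonal fun i => ∑ j, A i j)⁻¹ * A * V) i k| ≤
      min (∑ j, A i j)⁻¹ (∑ j, Ahat i j)⁻¹ *
        (|((Ahat - A) * V) i k| + |∑ j, A i j - ∑ j, Ahat i j| * maxAbs V) := by
  rw [Matrix.sub_mul, Matrix.sub_apply, Matrix.sub_apply, Matrix.mul_assoc, Matrix.mul_assoc,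
    inv_diagonal_of_ne_zero fun j => (hArow j).ne',
    inv_diagonal_of_ne_zero fun j => (hAhatrow j).ne', diagonal_mul, diagonal_mul]
  exact abs_inv_mul_sub_inv_mul_le_min (hArow i) (hAhatrow i)
    (abs_mul_apply_le_sum_mul_maxAbs hA V i k) (abs_mul_apply_le_sum_mul_maxAbs hAhat V i k)

theorem stmt15_general {n m p : ℕ}
    (A Ahat : Matrix (Fin n) (Fin m) ℝ) (V : Matrix (Fin m) (Fin p) ℝ)
    (hA : ∀ i j, 0 ≤ A i j) (hAhat : ∀ i j, 0 ≤ Ahat i j)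
    (hArow : ∀ i, 0 < ∑ j, A i j) (hAhatrow : ∀ i, 0 < ∑ j, Ahat i j)
    (D Dhat : Matrix (Fin n) (Fin n) ℝ)
    (hD : D = Matrix.diagonal (A *ᵥ fun _ => (1:ℝ)))
    (hDhat : Dhat = Matrix.diagonal (Ahat *ᵥ fun _ => (1:ℝ))) :
    maxAbs (Dhat⁻¹ * Ahat * V - D⁻¹ * A * V) ≤
      min (maxAbs (((m : ℝ)⁻¹ • D)⁻¹)) (maxAbs (((m : ℝ)⁻¹ • Dhat)⁻¹)) *
        ((m : ℝ)⁻¹ * maxAbs ((Ahat - A) * V) +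
         (m : ℝ)⁻¹ * (⨆ i, |(A *ᵥ fun _ => (1:ℝ)) i - (Ahat *ᵥ fun _ => (1:ℝ)) i|) *
           maxAbs V) := by
  have hrowSum (B : Matrix (Fin n) (Fin m) ℝ) : (B *ᵥ fun _ => (1:ℝ)) = fun i => ∑ j, B i j := by
    ext i; simp [mulVec, dotProduct]
  subst hD hDhat
  rw [hrowSum A, hrowSum Ahat]
  set r := fun i => ∑ j, A i j
  set s := fun i => ∑ j, Ahat i j
  have hW := maxAbs_nonneg V
  have hE := maxAbs_nonneg ((Ahat - A) * V)
  have hΔ : 0 ≤ ⨆ i, |r i - s i| := Real.iSup_nonneg fun _ => abs_nonneg _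
  refine maxAbs_le (mul_nonneg (le_min (maxAbs_nonneg _) (maxAbs_nonneg _)) (by positivity))
    fun i k => ?_
  have hm : (0 : ℝ) < m := Nat.cast_pos.2 <| Nat.pos_of_ne_zero <| by
    rintro rfl
    simpa using hArow i
  have hmin : min (r i)⁻¹ (s i)⁻¹ ≤
      (m : ℝ)⁻¹ * min (maxAbs ((m : ℝ)⁻¹ • diagonal r)⁻¹) (maxAbs ((m : ℝ)⁻¹ • diagonal s)⁻¹) := by
    rw [mul_min_of_nonneg _ _ (by positivity)]
    exact min_le_min (inv_le_mul_maxAbs_inv_smul_diagonal (by positivity) hArow i)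
      (inv_le_mul_maxAbs_inv_smul_diagonal (by positivity) hAhatrow i)
  calc _ ≤ min (r i)⁻¹ (s i)⁻¹ * (|((Ahat - A) * V) i k| + |r i - s i| * maxAbs V) :=
        abs_inv_diagonal_rowSum_mul_sub_le hA hAhat hArow hAhatrow V i k
    _ ≤ _ * (maxAbs ((Ahat - A) * V) + (⨆ i, |r i - s i|) * maxAbs V) := by
      refine mul_le_mul hmin ?_ (by positivity)
        ((le_min (inv_nonneg.2 (hArow i).le) (inv_nonneg.2 (hAhatrow i).le)).trans hmin)
      gcongr
      · exact abs_le_maxAbs _ i k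
      · exact le_ciSup (Finite.bddAbove_range fun i => |r i - s i|) i
    _ = _ := by ring

theorem stmt15 {n m p : ℕ} (hn : 1 ≤ n) (hm : 1 ≤ m) (hp : 1 ≤ p)
    (A Ahat : Matrix (Fin n) (Fin m) ℝ) (V : Matrix (Fin m) (Fin p) ℝ)
    (hA : ∀ i j, 0 ≤ A i j) (hAhat : ∀ i j, 0 ≤ Ahat i j)
    (hArow : ∀ i, 0 < ∑ j, A i j) (hAhatrow : ∀ i, 0 < ∑ j, Ahat i j)
    (D Dhat : Matrix (Fin n) (Fin n) ℝ)
    (hD : D = Matrix.diagonal (A *ᵥ fun _ => (1:ℝ)))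
    (hDhat : Dhat = Matrix.diagonal (Ahat *ᵥ fun _ => (1:ℝ))) :
    maxAbs (Dhat⁻¹ * Ahat * V - D⁻¹ * A * V) ≤
      min (maxAbs (((m : ℝ)⁻¹ • D)⁻¹)) (maxAbs (((m : ℝ)⁻¹ • Dhat)⁻¹)) *
        ((m : ℝ)⁻¹ * maxAbs ((Ahat - A) * V) +
         (m : ℝ)⁻¹ * (⨆ i, |(A *ᵥ fun _ => (1:ℝ)) i - (Ahat *ᵥ fun _ => (1:ℝ)) i|) *
           maxAbs V) :=
  stmt15_general A Ahat V hA hAhat hArow hAhatrow D Dhat hD hDhat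

end
end

section
/- Let d ≥ 1 and n ≥ 1, let q_1, …, q_n, k_1, …, k_n ∈ ℝ^d, let V ∈ ℝ^{n×d} with rows v_1, …, v_n, and set v_max := max_{l∈[n]} ‖v_l‖_∞, R := max_{i∈[n]} max(‖q_i‖₂, ‖k_i‖₂). Define the attention kernel κ_att((a,b),(a',b')) := exp(⟨a,a'⟩)·⟨b,b'⟩ on pairs (a,b) ∈ ℝ^d × ℝ^{d+1}, the input points x̃_l := (k_l/d^{1/4}, (v_l, v_max)) for l ∈ [n], and the query points y_{i,j} := (q_i/d^{1/4}, e_j) for i ∈ [n], j ∈ [d+1], where e_j is the j-th standard basis vector of ℝ^{d+1}. Then: (i) min_{i∈[n]} (1/n)·Σ_{j=1}^n exp(⟨q_i,k_j⟩/√d) ≥ exp(−R²/√d); (ii) for every l ∈ [n], √(κ_att(x̃_l, x̃_l)) ≤ exp(R²/(2√d))·√( max_{l'∈[n]} ‖v_{l'}‖₂² + v_max² ); (iii) for all i ∈ [n], j ∈ [d+1], ‖y_{i,j}‖₂ ≤ √(R²/√d + 1) and √(κ_att(y_{i,j}, y_{i,j})) ≤ exp(R²/(2√d)); and (iv) for all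 i, k ∈ [n], j, m ∈ [d+1], and l ∈ [n], |κ_att(y_{i,j}, x̃_l) − κ_att(y_{k,m}, x̃_l)| ≤ exp(R²/√d)·√(R²/√d + 2)·v_max·‖y_{i,j} − y_{k,m}‖₂. -/
/-!
Rescaling by `d^(-1/4)` puts all queries and keys in the ball of radius `ρ = R / d^(1/4)`,
with `ρ² = R²/√d`, so by Cauchy–Schwarz every exponent `⟪a, x⟫` lies in `[-ρ², ρ²]`; this gives
(i)–(iii) directly. Against `x̃_l = (x, z)`, the kernel at `(a, e_j)` is `exp ⟪a, x⟫ * z_j`. Writing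
the difference as `exp ⟪a, x⟫ (z_j - z_m) + (exp ⟪a, x⟫ - exp ⟪a', x⟫) z_m`, the first term is at
most `exp ρ² · √2 v_max ‖e_j - e_m‖`, the second at most `exp ρ² · ρ ‖a - a'‖ · v_max` (as `exp` is
`exp ρ²`-Lipschitz on `(-∞, ρ²]`), and Cauchy–Schwarz in `ℝ²` merges the two into (iv).
-/

open Finset
open scoped RealInnerProductSpace

noncomputable section

/-- Euclidean norm of a concatenated pair of Euclidean vectors. -/
def pairNorm {d : ℕ} (p : EuclideanSpace ℝ (Fin d) × EuclideanSpace ℝ (Fin (d+1))) : ℝ :=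
  Real.sqrt (‖p.1‖^2 + ‖p.2‖^2)

lemma Real.abs_exp_sub_exp_le {a b M : ℝ} (ha : a ≤ M) (hb : b ≤ M) :
    |exp a - exp b| ≤ exp M * |a - b| := by
  wlog hba : b ≤ a generalizing a b
  · rw [abs_sub_comm, abs_sub_comm a]
    exact this hb ha (le_of_not_ge hba)
  rw [abs_of_nonneg (sub_nonneg.2 (exp_le_exp.2 hba)), abs_of_nonneg (sub_nonneg.2 hba)]
  calc exp a - exp b = exp a * (1 - exp (b - a)) := by rw [mul_sub, ← exp_add]; ring_nf
    _ ≤ exp M * (a - b) :=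
      mul_le_mul (exp_le_exp.2 ha) (by linarith [add_one_le_exp (b - a)])
        (sub_nonneg.2 (exp_le_one_iff.2 (by linarith))) (exp_nonneg M)

lemma mul_add_mul_le_sqrt_mul_sqrt (a b u w : ℝ) :
    a * u + b * w ≤ √(a ^ 2 + b ^ 2) * √(u ^ 2 + w ^ 2) := by
  rw [← Real.sqrt_mul (by positivity)]
  exact (le_abs_self _).trans (Real.abs_le_sqrt (by nlinarith [sq_nonneg (a * w - b * u)]))

lemma Fin.abs_snoc_le {d : ℕ} {f : Fin d → ℝ} {a V : ℝ} (hf : ∀ j, |f j| ≤ V) (ha : |a| ≤ V)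
    (t : Fin (d + 1)) : |Fin.snoc (α := fun _ => ℝ) f a t| ≤ V := by
  induction t using Fin.lastCases <;> simp [ha, hf]

lemma EuclideanSpace.norm_snoc {d : ℕ} (v : EuclideanSpace ℝ (Fin d)) (a : ℝ) :
    ‖(WithLp.equiv 2 (Fin (d + 1) → ℝ)).symm (Fin.snoc (fun j => v j) a)‖ = √(‖v‖ ^ 2 + a ^ 2) := by
  rw [EuclideanSpace.norm_eq, EuclideanSpace.norm_sq_eq, Fin.sum_univ_castSucc]
  simp

lemma EuclideanSpace.norm_single_sub_single {ι : Type*} [Fintype ι] [DecidableEq ι] {j m : ι}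
    (hjm : j ≠ m) : ‖EuclideanSpace.single j (1 : ℝ) - EuclideanSpace.single m 1‖ = √2 := by
  rw [EuclideanSpace.norm_eq]
  congr 1
  rw [Fintype.sum_eq_add j m hjm fun x hx => by simp [hx.1, hx.2]]
  simp [hjm, hjm.symm]
  norm_num

lemma abs_sub_le_sqrt_two_mul_norm_single_sub_single {ι : Type*} [Fintype ι] [DecidableEq ι]
    {z : EuclideanSpace ℝ ι} {V : ℝ} (hz : ∀ t, |z t| ≤ V) (j m : ι) :
    |z j - z m| ≤ √2 * V * ‖EuclideanSpace.single j (1 : ℝ) - EuclideanSpace.single m 1‖ := by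
  rcases eq_or_ne j m with rfl | hjm
  · simp
  rw [EuclideanSpace.norm_single_sub_single hjm, mul_right_comm, Real.mul_self_sqrt zero_le_two]
  linarith [abs_sub (z j) (z m), hz j, hz m]

lemma inv_rpow_one_div_four_sq {x : ℝ} (hx : 0 ≤ x) : ((x ^ ((1 : ℝ) / 4))⁻¹) ^ 2 = (√x)⁻¹ := by
  rw [inv_pow, ← Real.rpow_natCast, ← Real.rpow_mul hx, Real.sqrt_eq_rpow]
  norm_num

section AttentionKernel

variable {E F : Type*} [NormedAddCommGroup E] [InnerProductSpace ℝ E]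
  [NormedAddCommGroup F] [InnerProductSpace ℝ F]

lemma abs_real_inner_le_sq {a b : E} {ρ : ℝ} (ha : ‖a‖ ≤ ρ) (hb : ‖b‖ ≤ ρ) :
    |⟪a, b⟫| ≤ ρ ^ 2 :=
  (abs_real_inner_le_norm a b).trans <| by
    rw [sq]; exact mul_le_mul ha hb (norm_nonneg b) ((norm_nonneg a).trans ha)

lemma sqrt_exp_inner_self_mul_inner_self_le {a : E} {ρ : ℝ} (ha : ‖a‖ ≤ ρ) (b : F) :
    √(Real.exp ⟪a, a⟫ * ⟪b, b⟫) ≤ Real.exp (ρ ^ 2 / 2) * ‖b‖ := by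
  rw [real_inner_self_eq_norm_sq, real_inner_self_eq_norm_sq, Real.sqrt_mul (Real.exp_nonneg _),
    Real.sqrt_sq (norm_nonneg b), ← Real.exp_half]
  gcongr

lemma abs_exp_inner_mul_sub_exp_inner_mul_le {ι : Type*} [Fintype ι] [DecidableEq ι]
    {a a' x : E} {z : EuclideanSpace ℝ ι} {ρ V : ℝ} (ha : ‖a‖ ≤ ρ) (ha' : ‖a'‖ ≤ ρ) (hx : ‖x‖ ≤ ρ)
    (hz : ∀ t, |z t| ≤ V) (j m : ι) :
    |Real.exp ⟪a, x⟫ * ⟪EuclideanSpace.single j 1, z⟫ -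
        Real.exp ⟪a', x⟫ * ⟪EuclideanSpace.single m 1, z⟫| ≤
      Real.exp (ρ ^ 2) * √(ρ ^ 2 + 2) * V *
        √(‖a - a'‖ ^ 2 + ‖EuclideanSpace.single j (1 : ℝ) - EuclideanSpace.single m 1‖ ^ 2) := by
  have hV : 0 ≤ V := (abs_nonneg _).trans (hz j)
  have hρ : 0 ≤ ρ := (norm_nonneg x).trans hx
  set u := ‖a - a'‖
  set w := ‖EuclideanSpace.single j (1 : ℝ) - EuclideanSpace.single m 1‖
  have hexp : |Real.exp ⟪a, x⟫ - Real.exp ⟪a', x⟫| ≤ Real.exp (ρ ^ 2) * (ρ * u) := by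
    refine (Real.abs_exp_sub_exp_le ((le_abs_self _).trans (abs_real_inner_le_sq ha hx))
      ((le_abs_self _).trans (abs_real_inner_le_sq ha' hx))).trans ?_
    rw [← inner_sub_left, mul_comm ρ]
    gcongr
    exact (abs_real_inner_le_norm _ _).trans (by gcongr)
  have hcoord := abs_sub_le_sqrt_two_mul_norm_single_sub_single hz j m
  have hcs := mul_add_mul_le_sqrt_mul_sqrt ρ √2 u w
  rw [Real.sq_sqrt zero_le_two] at hcs
  simp only [EuclideanSpace.inner_single_left, map_one, one_mul]
  calc |Real.exp ⟪a, x⟫ * z j - Real.exp ⟪a', x⟫ * z m|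
      = |Real.exp ⟪a, x⟫ * (z j - z m) + (Real.exp ⟪a, x⟫ - Real.exp ⟪a', x⟫) * z m| := by ring_nf
    _ ≤ Real.exp ⟪a, x⟫ * |z j - z m| + |Real.exp ⟪a, x⟫ - Real.exp ⟪a', x⟫| * |z m| :=
      (abs_add_le _ _).trans_eq (by rw [abs_mul, abs_mul, abs_of_pos (Real.exp_pos _)])
    _ ≤ Real.exp (ρ ^ 2) * (√2 * V * w) + Real.exp (ρ ^ 2) * (ρ * u) * V := by
      gcongr
      · exact (le_abs_self _).trans (abs_real_inner_le_sq ha hx)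
      · exact hz m
    _ = Real.exp (ρ ^ 2) * V * (ρ * u + √2 * w) := by ring
    _ ≤ Real.exp (ρ ^ 2) * V * (√(ρ ^ 2 + 2) * √(u ^ 2 + w ^ 2)) := by gcongr
    _ = _ := by ring

end AttentionKernel

theorem stmt16_general {d n : ℕ}
    (q k v : Fin n → EuclideanSpace ℝ (Fin d))
    (vmax : ℝ) (hvmax : vmax = ⨆ l, ⨆ j, |v l j|)
    (R : ℝ) (hR : R = ⨆ i, max ‖q i‖ ‖k i‖)
    (katt : (EuclideanSpace ℝ (Fin d) × EuclideanSpace ℝ (Fin (d+1))) →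
            (EuclideanSpace ℝ (Fin d) × EuclideanSpace ℝ (Fin (d+1))) → ℝ)
    (hkatt : ∀ p p', katt p p' = Real.exp ⟪p.1, p'.1⟫ * ⟪p.2, p'.2⟫)
    (xt : Fin n → EuclideanSpace ℝ (Fin d) × EuclideanSpace ℝ (Fin (d+1)))
    (hxt : ∀ l, xt l = (((d : ℝ) ^ ((1:ℝ)/4))⁻¹ • k l,
      (WithLp.equiv 2 (Fin (d+1) → ℝ)).symm (Fin.snoc (fun j => v l j) vmax)))
    (y : Fin n → Fin (d+1) → EuclideanSpace ℝ (Fin d) × EuclideanSpace ℝ (Fin (d+1)))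
    (hy : ∀ i j, y i j = (((d : ℝ) ^ ((1:ℝ)/4))⁻¹ • q i, EuclideanSpace.single j 1)) :
    (∀ i, Real.exp (-(R^2) / Real.sqrt d) ≤
       (1/(n : ℝ)) * ∑ j, Real.exp (⟪q i, k j⟫ / Real.sqrt d)) ∧
    (∀ l, Real.sqrt (katt (xt l) (xt l)) ≤
       Real.exp (R^2 / (2 * Real.sqrt d)) * Real.sqrt ((⨆ l', ‖v l'‖^2) + vmax^2)) ∧
    (∀ i j, pairNorm (y i j) ≤ Real.sqrt (R^2 / Real.sqrt d + 1) ∧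
       Real.sqrt (katt (y i j) (y i j)) ≤ Real.exp (R^2 / (2 * Real.sqrt d))) ∧
    (∀ i k' j m l, |katt (y i j) (xt l) - katt (y k' m) (xt l)| ≤
       Real.exp (R^2 / Real.sqrt d) * Real.sqrt (R^2 / Real.sqrt d + 2) * vmax *
         pairNorm (y i j - y k' m)) := by
  set c : ℝ := ((d : ℝ) ^ ((1:ℝ)/4))⁻¹
  have hc : c ^ 2 = (√d)⁻¹ := inv_rpow_one_div_four_sq d.cast_nonneg
  have hρ : R ^ 2 / √d = (c * R) ^ 2 := by rw [mul_pow, hc]; ring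
  have hρ_half : R ^ 2 / (2 * √d) = (c * R) ^ 2 / 2 := by rw [← hρ]; ring
  have hinner (a b : EuclideanSpace ℝ (Fin d)) : ⟪a, b⟫ / √d = ⟪c • a, c • b⟫ := by
    rw [real_inner_smul_left, real_inner_smul_right, ← mul_assoc, ← sq, hc]; ring
  have hscale {a : EuclideanSpace ℝ (Fin d)} (ha : ‖a‖ ≤ R) : ‖c • a‖ ≤ c * R := by
    rw [norm_smul, Real.norm_of_nonneg (by positivity)]; gcongr
  have hq i : ‖c • q i‖ ≤ c * R :=
    hscale (hR ▸ le_ciSup_of_le (Set.finite_range _).bddAbove i (le_max_left _ _))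
  have hk i : ‖c • k i‖ ≤ c * R :=
    hscale (hR ▸ le_ciSup_of_le (Set.finite_range _).bddAbove i (le_max_right _ _))
  have hvmax_nonneg : 0 ≤ vmax :=
    hvmax ▸ Real.iSup_nonneg fun l => Real.iSup_nonneg fun j => abs_nonneg _
  have hv l (t : Fin (d + 1)) : |Fin.snoc (α := fun _ => ℝ) (fun j => v l j) vmax t| ≤ vmax :=
    Fin.abs_snoc_le (fun j => hvmax ▸ le_ciSup_of_le (Set.finite_range _).bddAbove l
      (le_ciSup (f := fun j => |v l j|) (Set.finite_range _).bddAbove j))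
      (abs_of_nonneg hvmax_nonneg).le t
  simp only [hkatt, hxt, hy, hρ, hρ_half, neg_div]
  refine ⟨fun i => ?_, fun l => ?_, fun i j => ⟨?_, ?_⟩, fun i k' j m l => ?_⟩
  · have hmean := le_expect (s := univ) ⟨i, mem_univ i⟩ fun j _ =>
      Real.exp_le_exp.2 (neg_le_of_abs_le (abs_real_inner_le_sq (hq i) (hk j)))
    simpa [hinner, Fintype.expect_eq_sum_div_card, div_eq_inv_mul] using hmean
  · refine (sqrt_exp_inner_self_mul_inner_self_le (hk l) _).trans ?_
    rw [EuclideanSpace.norm_snoc]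
    gcongr
    exact le_ciSup (f := fun l' => ‖v l'‖ ^ 2) (Set.finite_range _).bddAbove l
  · simp only [pairNorm, PiLp.norm_single, norm_one, one_pow]
    gcongr
    exact hq i
  · simpa using sqrt_exp_inner_self_mul_inner_self_le (hq i) (EuclideanSpace.single j (1 : ℝ))
  · exact abs_exp_inner_mul_sub_exp_inner_mul_le (hq i) (hq k') (hk l) (hv l) j m

theorem stmt16 {d n : ℕ} (hd : 1 ≤ d) (hn : 1 ≤ n)
    (q k v : Fin n → EuclideanSpace ℝ (Fin d))
    (vmax : ℝ) (hvmax : vmax = ⨆ l, ⨆ j, |v l j|)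
    (R : ℝ) (hR : R = ⨆ i, max ‖q i‖ ‖k i‖)
    (katt : (EuclideanSpace ℝ (Fin d) × EuclideanSpace ℝ (Fin (d+1))) →
            (EuclideanSpace ℝ (Fin d) × EuclideanSpace ℝ (Fin (d+1))) → ℝ)
    (hkatt : ∀ p p', katt p p' = Real.exp ⟪p.1, p'.1⟫ * ⟪p.2, p'.2⟫)
    (xt : Fin n → EuclideanSpace ℝ (Fin d) × EuclideanSpace ℝ (Fin (d+1)))
    (hxt : ∀ l, xt l = (((d : ℝ) ^ ((1:ℝ)/4))⁻¹ • k l,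
      (WithLp.equiv 2 (Fin (d+1) → ℝ)).symm (Fin.snoc (fun j => v l j) vmax)))
    (y : Fin n → Fin (d+1) → EuclideanSpace ℝ (Fin d) × EuclideanSpace ℝ (Fin (d+1)))
    (hy : ∀ i j, y i j = (((d : ℝ) ^ ((1:ℝ)/4))⁻¹ • q i, EuclideanSpace.single j 1)) :
    (∀ i, Real.exp (-(R^2) / Real.sqrt d) ≤
       (1/(n : ℝ)) * ∑ j, Real.exp (⟪q i, k j⟫ / Real.sqrt d)) ∧
    (∀ l, Real.sqrt (katt (xt l) (xt l)) ≤
       Real.exp (R^2 / (2 * Real.sqrt d)) * Real.sqrt ((⨆ l', ‖v l'‖^2) + vmax^2)) ∧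
    (∀ i j, pairNorm (y i j) ≤ Real.sqrt (R^2 / Real.sqrt d + 1) ∧
       Real.sqrt (katt (y i j) (y i j)) ≤ Real.exp (R^2 / (2 * Real.sqrt d))) ∧
    (∀ i k' j m l, |katt (y i j) (xt l) - katt (y k' m) (xt l)| ≤
       Real.exp (R^2 / Real.sqrt d) * Real.sqrt (R^2 / Real.sqrt d + 2) * vmax *
         pairNorm (y i j - y k' m)) :=
  stmt16_general q k v vmax hvmax R hR katt hkatt xt hxt y hy

end
end

section
/- Let x_1, …, x_n ∈ ℝ^d and η_1, …, η_n ∈ {−1, +1}, and let τ be the permutation of {1,…,n} that lists first, in increasing order, all indices i with η_i = +1, followed by, in decreasing order, all indices i with η_i = −1. Then max_{j∈[n]} ‖ Σ_{i=1}^j x_{τ(i)} ‖₂ ≤ (1/2)·max_{j∈[n]} ‖ Σ_{i=1}^j x_i ‖₂ + (1/2)·max_{j∈[n]} ‖ Σ_{i=1}^j η_i·x_i ‖₂ + ‖ Σ_{i=1}^n x_i ‖₂. -/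
open Finset

noncomputable section

private lemma iio_norm_le {d n : ℕ} (hn : 0 < n) (f : Fin n → EuclideanSpace ℝ (Fin d))
    (k : Fin n) :
    ‖∑ i ∈ Finset.Iio k, f i‖ ≤ ⨆ j : Fin n, ‖∑ i ∈ Finset.Iic j, f i‖ := by
  have hbdd : BddAbove (Set.range fun j : Fin n => ‖∑ i ∈ Finset.Iic j, f i‖) :=
    Set.Finite.bddAbove (Set.finite_range _)
  rcases Nat.eq_zero_or_pos k.val with hk | hk
  · have he : Finset.Iio k = ∅ := by
      ext i; simp [Finset.mem_Iio, Fin.lt_def, hk]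
    rw [he]
    simp only [Finset.sum_empty, norm_zero]
    exact le_trans (norm_nonneg _) (le_ciSup hbdd k)
  · have hk1 : k.val - 1 < n := lt_of_le_of_lt (Nat.sub_le _ _) k.isLt
    have he : Finset.Iio k = Finset.Iic (⟨k.val - 1, hk1⟩ : Fin n) := by
      ext i
      simp only [Finset.mem_Iio, Finset.mem_Iic, Fin.lt_def, Fin.le_def]
      omega
    rw [he]
    exact le_ciSup hbdd _

theorem stmt17 {d n : ℕ} (x : Fin n → EuclideanSpace ℝ (Fin d)) (η : Fin n → ℝ)
    (hη : ∀ i, η i = 1 ∨ η i = -1)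
    (s : ℕ) (hs : s = Nat.card {i : Fin n // η i = 1})
    -- `τ` lists first, in increasing order, the indices with `η i = 1`,
    -- then, in decreasing order, the indices with `η i = -1`
    (τ : Equiv.Perm (Fin n))
    (hτ_mem : ∀ a : Fin n, (a : ℕ) < s ↔ η (τ a) = 1)
    (hτ_inc : ∀ a b : Fin n, (a : ℕ) < s → (b : ℕ) < s → (a < b ↔ τ a < τ b))
    (hτ_dec : ∀ a b : Fin n, s ≤ (a : ℕ) → s ≤ (b : ℕ) → (a < b ↔ τ b < τ a)) :
    (⨆ j : Fin n, ‖∑ i ∈ Finset.Iic j, x (τ i)‖) ≤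
      (1/2) * (⨆ j : Fin n, ‖∑ i ∈ Finset.Iic j, x i‖) +
      (1/2) * (⨆ j : Fin n, ‖∑ i ∈ Finset.Iic j, η i • x i‖) +
      ‖∑ i, x i‖ := by
  classical
  rcases Nat.eq_zero_or_pos n with hn | hn
  · subst hn
    simp [iSup, Set.range_eq_empty, Real.sSup_empty]
  set A := ⨆ j : Fin n, ‖∑ i ∈ Finset.Iic j, x i‖ with hA
  set B := ⨆ j : Fin n, ‖∑ i ∈ Finset.Iic j, η i • x i‖ with hB
  set T := ‖∑ i, x i‖ with hT
  have hbddA : BddAbove (Set.range fun j : Fin n => ‖∑ i ∈ Finset.Iic j, x i‖) :=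
    Set.Finite.bddAbove (Set.finite_range _)
  have hbddB : BddAbove (Set.range fun j : Fin n => ‖∑ i ∈ Finset.Iic j, η i • x i‖) :=
    Set.Finite.bddAbove (Set.finite_range _)
  have hA0 : (0:ℝ) ≤ A := le_trans (norm_nonneg _) (le_ciSup hbddA ⟨0, hn⟩)
  have hB0 : (0:ℝ) ≤ B := le_trans (norm_nonneg _) (le_ciSup hbddB ⟨0, hn⟩)
  have hT0 : (0:ℝ) ≤ T := norm_nonneg _
  haveI : Nonempty (Fin n) := ⟨⟨0, hn⟩⟩
  have hhalf : ‖(1/2 : ℝ)‖ = 1/2 := by rw [Real.norm_eq_abs]; norm_num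
  apply ciSup_le
  intro j
  have himg : ∑ i ∈ Finset.Iic j, x (τ i) = ∑ i ∈ (Finset.Iic j).image τ, x i :=
    (Finset.sum_image (fun a _ b _ h => τ.injective h)).symm
  by_cases hj : (j : ℕ) < s
  · -- prefix inside the selected block
    have hset : (Finset.Iic j).image τ = (Finset.Iic (τ j)).filter (fun i => η i = 1) := by
      ext i
      simp only [Finset.mem_image, Finset.mem_filter, Finset.mem_Iic]
      constructor
      · rintro ⟨a, ha, rfl⟩
        have has : (a : ℕ) < s := lt_of_le_of_lt (Fin.le_def.mp ha) hj
        refine ⟨?_, (hτ_mem a).mp has⟩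
        rcases lt_or_eq_of_le ha with h | h
        · exact le_of_lt ((hτ_inc a j has hj).mp h)
        · exact le_of_eq (by rw [h])
      · rintro ⟨hle, hi⟩
        refine ⟨τ.symm i, ?_, τ.apply_symm_apply i⟩
        have hs' : ((τ.symm i : Fin n) : ℕ) < s := by
          apply (hτ_mem _).mpr
          rwa [τ.apply_symm_apply]
        by_contra hcon
        push_neg at hcon
        have hlt := (hτ_inc j (τ.symm i) hj hs').mp hcon
        rw [τ.apply_symm_apply] at hlt
        exact absurd hle (not_le.mpr hlt)
    have hsum : ∑ i ∈ (Finset.Iic (τ j)).filter (fun i => η i = 1), x i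
        = (1/2 : ℝ) • (∑ i ∈ Finset.Iic (τ j), x i + ∑ i ∈ Finset.Iic (τ j), η i • x i) := by
      rw [Finset.sum_filter, ← Finset.sum_add_distrib, Finset.smul_sum]
      refine Finset.sum_congr rfl fun i _ => ?_
      rcases hη i with h | h
      · simp only [h, if_pos, one_smul]
        module
      · rw [h, if_neg (by norm_num)]
        module
    rw [himg, hset, hsum]
    have h1 : ‖∑ i ∈ Finset.Iic (τ j), x i‖ ≤ A := le_ciSup hbddA (τ j)
    have h2 : ‖∑ i ∈ Finset.Iic (τ j), η i • x i‖ ≤ B := le_ciSup hbddB (τ j)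
    have hle := norm_add_le (∑ i ∈ Finset.Iic (τ j), x i) (∑ i ∈ Finset.Iic (τ j), η i • x i)
    rw [norm_smul, hhalf]
    linarith
  · -- prefix reaching into the unselected block
    push_neg at hj
    have hset : (Finset.Iic j).image τ
        = Finset.univ.filter (fun i => η i = 1 ∨ τ j ≤ i) := by
      ext i
      simp only [Finset.mem_image, Finset.mem_filter, Finset.mem_univ, Finset.mem_Iic, true_and]
      constructor
      · rintro ⟨a, ha, rfl⟩
        by_cases has : (a : ℕ) < s
        · exact Or.inl ((hτ_mem a).mp has)
        · push_neg at has
          right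
          rcases lt_or_eq_of_le ha with h | h
          · exact le_of_lt ((hτ_dec a j has hj).mp h)
          · rw [h]
      · intro h
        refine ⟨τ.symm i, ?_, τ.apply_symm_apply i⟩
        rcases h with h1 | h2
        · have hs' : ((τ.symm i : Fin n) : ℕ) < s := by
            apply (hτ_mem _).mpr
            rwa [τ.apply_symm_apply]
          exact Fin.le_def.mpr (le_trans (le_of_lt hs') hj)
        · by_contra hcon
          push_neg at hcon
          have hs' : s ≤ ((τ.symm i : Fin n) : ℕ) :=
            le_trans hj (le_of_lt (Fin.lt_def.mp hcon))
          have hlt := (hτ_dec j (τ.symm i) hj hs').mp hcon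
          rw [τ.apply_symm_apply] at hlt
          exact absurd h2 (not_le.mpr hlt)
    have hneg : Finset.univ.filter (fun i => ¬(η i = 1 ∨ τ j ≤ i))
        = (Finset.Iio (τ j)).filter (fun i => η i = -1) := by
      ext i
      simp only [Finset.mem_filter, Finset.mem_univ, Finset.mem_Iio, true_and, not_or, not_le]
      constructor
      · rintro ⟨h1, h2⟩
        exact ⟨h2, (hη i).resolve_left h1⟩
      · rintro ⟨h2, h1⟩
        exact ⟨by rw [h1]; norm_num, h2⟩
    have hsplit : ∑ i ∈ Finset.univ.filter (fun i => η i = 1 ∨ τ j ≤ i), x i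
        = (∑ i, x i) - ∑ i ∈ (Finset.Iio (τ j)).filter (fun i => η i = -1), x i := by
      rw [eq_sub_iff_add_eq, ← hneg, Finset.sum_filter_add_sum_filter_not]
    have hsum : ∑ i ∈ (Finset.Iio (τ j)).filter (fun i => η i = -1), x i
        = (1/2 : ℝ) • (∑ i ∈ Finset.Iio (τ j), x i - ∑ i ∈ Finset.Iio (τ j), η i • x i) := by
      rw [Finset.sum_filter, ← Finset.sum_sub_distrib, Finset.smul_sum]
      refine Finset.sum_congr rfl fun i _ => ?_
      rcases hη i with h | h
      · rw [h, if_neg (by norm_num)]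
        module
      · simp only [h, if_pos]
        module
    rw [himg, hset, hsplit, hsum]
    have h1 : ‖∑ i ∈ Finset.Iio (τ j), x i‖ ≤ A := iio_norm_le hn x (τ j)
    have h2 : ‖∑ i ∈ Finset.Iio (τ j), η i • x i‖ ≤ B :=
      iio_norm_le hn (fun i => η i • x i) (τ j)
    have hle1 := norm_sub_le (∑ i, x i)
      ((1/2 : ℝ) • (∑ i ∈ Finset.Iio (τ j), x i - ∑ i ∈ Finset.Iio (τ j), η i • x i))
    have hle2 := norm_sub_le (∑ i ∈ Finset.Iio (τ j), x i)
      (∑ i ∈ Finset.Iio (τ j), η i • x i)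
    rw [norm_smul, hhalf] at hle1
    linarith
  done

end
end
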